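/- arXiv:math/0204161 — 9 statements merged into one kernel-verified Lean document; each statement's English description precedes it below -/
import Mathlib

section
/- Fix t₀ ∈ I. Then there exist real numbers C₀, C₁, …, C_{2n}, not all zero, such that for every differentiable solution z : I → (Fin (2n) → ℝ) of the linear system z'(t) = A(t) z(t), the deviation function φ_z satisfies Σ_{i=0}^{2n} C_i · (d^i φ_z/dt^i)(t₀) = 0. (Theorem 6.1: along each trajectory of a Newtonian dynamical system all deviation functions satisfy one and the same linear homogeneous ordinary differential relation of order at most 2n, because the solution space of the linearized equations has dimension 2n.) -/
open Set Filter Topology Module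

section aux

variable {m : ℕ} {a b : ℝ} {A : ℝ → Fin m → Fin m → ℝ}

/-- Solutions of the linear system are C^k on the open interval, componentwise. -/
private lemma sol_contDiffOn
    (hA : ∀ i j, ContDiffOn ℝ (⊤ : ℕ∞) (fun t => A t i j) (Set.Ioo a b))
    {z : ℝ → Fin m → ℝ}
    (hz : ∀ t ∈ Set.Ioo a b, HasDerivAt z (fun i => ∑ j, A t i j * z t j) t)
    (k : ℕ) : ∀ i, ContDiffOn ℝ k (fun t => z t i) (Set.Ioo a b) := by
  induction k with
  | zero =>
    intro i
    rw [Nat.cast_zero, contDiffOn_zero]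
    exact fun t ht => (hasDerivAt_pi.1 (hz t ht) i).continuousAt.continuousWithinAt
  | succ k IH =>
    intro i
    have h2 : ContDiffOn ℝ ((k : ℕ∞) + 1) (fun t => z t i) (Set.Ioo a b) := by
      rw [contDiffOn_succ_iff_deriv_of_isOpen isOpen_Ioo]
      refine ⟨fun t ht =>
          (hasDerivAt_pi.1 (hz t ht) i).differentiableAt.differentiableWithinAt,
        fun h => absurd h (by simp), ?_⟩
      have hderiv : ∀ t ∈ Set.Ioo a b, deriv (fun t => z t i) t = ∑ j, A t i j * z t j :=
        fun t ht => (hasDerivAt_pi.1 (hz t ht) i).deriv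
      have h3 : ContDiffOn ℝ (k : ℕ∞) (deriv fun t => z t i) (Set.Ioo a b) :=
        (ContDiffOn.sum fun j _ => ((hA i j).of_le (by exact_mod_cast le_top)).mul (IH j)).congr hderiv
      exact_mod_cast h3
    exact_mod_cast h2

/-- A solution vanishing at an interior point vanishes near that point. -/
private lemma sol_eventually_zero
    (hA : ∀ i j, ContDiffOn ℝ (⊤ : ℕ∞) (fun t => A t i j) (Set.Ioo a b))
    {z : ℝ → Fin m → ℝ} {t₀ : ℝ} (ht₀ : t₀ ∈ Set.Ioo a b)
    (hz : ∀ t ∈ Set.Ioo a b, HasDerivAt z (fun i => ∑ j, A t i j * z t j) t)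
    (h0 : z t₀ = 0) : z =ᶠ[𝓝 t₀] (fun _ => 0) := by
  obtain ⟨ε, hε, hJ⟩ : ∃ ε > 0, Set.Icc (t₀ - ε) (t₀ + ε) ⊆ Set.Ioo a b := by
    refine ⟨min (t₀ - a) (b - t₀) / 2, by
      have h1 := ht₀.1; have h2 := ht₀.2
      have : 0 < min (t₀ - a) (b - t₀) := lt_min (by linarith) (by linarith)
      linarith, ?_⟩
    intro t ht
    constructor
    · have : min (t₀ - a) (b - t₀) / 2 ≤ (t₀ - a) / 2 := by
        gcongr; exact min_le_left _ _
      have := ht.1; have := ht₀.1; linarith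
    · have : min (t₀ - a) (b - t₀) / 2 ≤ (b - t₀) / 2 := by
        gcongr; exact min_le_right _ _
      have := ht.2; have := ht₀.2; linarith
  -- projection onto the compact interval
  set proj : ℝ → ℝ := fun t => max (t₀ - ε) (min t (t₀ + ε)) with hproj
  have hprojmem : ∀ t, proj t ∈ Set.Icc (t₀ - ε) (t₀ + ε) := by
    intro t
    refine ⟨le_max_left _ _, max_le (by linarith) (min_le_right _ _)⟩
  have hprojeq : ∀ t ∈ Set.Icc (t₀ - ε) (t₀ + ε), proj t = t := by
    intro t ht
    simp only [hproj]
    rw [min_eq_left ht.2, max_eq_right ht.1]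
  -- uniform bound on the matrix coefficients on the compact interval
  obtain ⟨M, hM⟩ : ∃ M, ∀ t ∈ Set.Icc (t₀ - ε) (t₀ + ε), ∀ i j, |A t i j| ≤ M := by
    have hcont : ContinuousOn (fun t => (fun p : Fin m × Fin m => A t p.1 p.2))
        (Set.Icc (t₀ - ε) (t₀ + ε)) := by
      apply continuousOn_pi.2
      intro p
      exact ((hA p.1 p.2).continuousOn).mono hJ
    obtain ⟨C, hC⟩ := (isCompact_Icc).exists_bound_of_continuousOn hcont
    refine ⟨C, fun t ht i j => ?_⟩
    calc |A t i j| = ‖(fun p : Fin m × Fin m => A t p.1 p.2) (i, j)‖ := rfl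
      _ ≤ ‖fun p : Fin m × Fin m => A t p.1 p.2‖ := norm_le_pi_norm (fun p : Fin m × Fin m => A t p.1 p.2) (i, j)
      _ ≤ C := hC t ht
  set M' : ℝ := max M 0 with hM'
  have hM'0 : 0 ≤ M' := le_max_right _ _
  have hMb : ∀ t ∈ Set.Icc (t₀ - ε) (t₀ + ε), ∀ i j, |A t i j| ≤ M' :=
    fun t ht i j => (hM t ht i j).trans (le_max_left _ _)
  set K : NNReal := ⟨m * M', by positivity⟩ with hK
  set v : ℝ → (Fin m → ℝ) → (Fin m → ℝ) :=
    fun t x => fun i => ∑ j, A (proj t) i j * x j with hv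
  have hlip : ∀ t, LipschitzOnWith K (v t) Set.univ := by
    intro t
    rw [lipschitzOnWith_univ]
    apply LipschitzWith.of_dist_le_mul
    intro x y
    rw [dist_eq_norm, dist_eq_norm]
    have hKc : (K : ℝ) = m * M' := rfl
    rw [hKc]
    have : v t x - v t y = fun i => ∑ j, A (proj t) i j * (x j - y j) := by
      funext i
      simp [hv, mul_sub, Finset.sum_sub_distrib]
    rw [this]
    have h1 : (0 : ℝ) ≤ m * M' * ‖x - y‖ := by positivity
    refine (pi_norm_le_iff_of_nonneg h1).2 fun i => ?_
    calc ‖∑ j, A (proj t) i j * (x j - y j)‖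
        ≤ ∑ j, ‖A (proj t) i j * (x j - y j)‖ := norm_sum_le _ _
      _ ≤ ∑ _j : Fin m, M' * ‖x - y‖ := by
          refine Finset.sum_le_sum fun j _ => ?_
          rw [norm_mul]
          have h2 : ‖A (proj t) i j‖ ≤ M' := hMb _ (hprojmem t) i j
          have h3 : ‖(x - y) j‖ ≤ ‖x - y‖ := norm_le_pi_norm _ _
          have h4 : ‖x j - y j‖ ≤ ‖x - y‖ := by simpa using h3
          exact mul_le_mul h2 h4 (norm_nonneg _) hM'0
      _ = m * M' * ‖x - y‖ := by
          rw [Finset.sum_const, Finset.card_univ, Fintype.card_fin, nsmul_eq_mul]; ring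
  have hmem : Set.Ioo (t₀ - ε) (t₀ + ε) ∈ 𝓝 t₀ :=
    Ioo_mem_nhds (by linarith) (by linarith)
  refine ODE_solution_unique_of_eventually (Filter.Eventually.of_forall hlip) ?_ ?_ (by simpa using h0)
  · filter_upwards [hmem] with t ht
    refine ⟨?_, trivial⟩
    have h5 : proj t = t := hprojeq t (Ioo_subset_Icc_self ht)
    have h6 : t ∈ Set.Ioo a b := hJ (Ioo_subset_Icc_self ht)
    have := hz t h6
    simpa [hv, h5] using this
  · filter_upwards with t
    refine ⟨?_, trivial⟩
    have : v t 0 = 0 := by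
      funext i; simp [hv]
    rw [this]
    exact hasDerivAt_const _ _

end aux

/-- Theorem 6.1: along a fixed trajectory of a Newtonian dynamical system, all deviation
functions satisfy one and the same linear homogeneous ordinary differential relation of
order at most `2n`.  Formally: given the smooth coefficient matrix `A` of the linearized
equations and the smooth covector family `c` defining the deviation functions, and a point
`t₀` of the open interval, there are coefficients `C₀, …, C_{2n}`, not all zero, such that
for every differentiable solution `z` of `z' = A z` the deviation function
`φ_z(t) = ∑ s, c s t · z s t` satisfies `∑ i, C i · φ_z⁽ⁱ⁾(t₀) = 0`. -/
theorem stmt_0 (n : ℕ) (hn : 1 ≤ n) (a b : ℝ) (t₀ : ℝ) (ht₀ : t₀ ∈ Set.Ioo a b)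
    (A : ℝ → Fin (2 * n) → Fin (2 * n) → ℝ)
    (hA : ∀ i j, ContDiffOn ℝ (⊤ : ℕ∞) (fun t => A t i j) (Set.Ioo a b))
    (c : ℝ → Fin (2 * n) → ℝ)
    (hc : ∀ s, ContDiffOn ℝ (⊤ : ℕ∞) (fun t => c t s) (Set.Ioo a b)) :
    ∃ C : Fin (2 * n + 1) → ℝ, C ≠ 0 ∧
      ∀ z : ℝ → Fin (2 * n) → ℝ,
        (∀ t ∈ Set.Ioo a b, HasDerivAt z (fun i => ∑ j, A t i j * z t j) t) →
        ∑ i : Fin (2 * n + 1),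
          C i * iteratedDeriv (i : ℕ) (fun t => ∑ s, c t s * z t s) t₀ = 0 := by
  classical
  let m := 2 * n
  let s : Set ℝ := Set.Ioo a b
  have hsU : UniqueDiffOn ℝ s := isOpen_Ioo.uniqueDiffOn
  -- the submodule of solutions
  let Sol : Submodule ℝ (ℝ → Fin m → ℝ) :=
  { carrier := {z | ∀ t ∈ s, HasDerivAt z (fun i => ∑ j, A t i j * z t j) t}
    add_mem' := by
      intro z w hz hw t ht
      have := (hz t ht).add (hw t ht)
      refine this.congr_deriv ?_
      funext i
      simp [mul_add, Finset.sum_add_distrib]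
    zero_mem' := by
      intro t ht
      have : (fun i => ∑ j, A t i j * (0 : ℝ → Fin m → ℝ) t j) = (0 : Fin m → ℝ) := by
        funext i; simp
      rw [this]
      exact hasDerivAt_const _ _
    smul_mem' := by
      intro r z hz t ht
      have := (hz t ht).const_smul r
      refine this.congr_deriv ?_
      funext i
      simp [Finset.mul_sum, mul_left_comm]
      }
  -- the deviation function
  let φ : (ℝ → Fin m → ℝ) → ℝ → ℝ := fun z t => ∑ s', c t s' * z t s'
  have hφsmooth : ∀ z ∈ Sol, ∀ k : ℕ, ContDiffOn ℝ k (φ z) s := by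
    intro z hz k
    have hz' : ∀ t ∈ Set.Ioo a b, HasDerivAt z (fun i => ∑ j, A t i j * z t j) t := hz
    exact ContDiffOn.sum fun s' _ =>
      ((hc s').of_le (by exact_mod_cast le_top)).mul (sol_contDiffOn hA hz' k s')
  -- linear maps
  let Φ : Sol →ₗ[ℝ] (Fin (m + 1) → ℝ) :=
  { toFun := fun z => fun i => iteratedDerivWithin (i : ℕ) (φ z.1) s t₀
    map_add' := by
      intro z w
      funext i
      have hadd : φ (z.1 + w.1) = φ z.1 + φ w.1 := by
        funext t
        simp [φ, mul_add, Finset.sum_add_distrib]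
      simp only [Submodule.coe_add, hadd, Pi.add_apply]
      rw [iteratedDerivWithin_add ht₀ hsU ((hφsmooth z.1 z.2 i).contDiffWithinAt ht₀) ((hφsmooth w.1 w.2 i).contDiffWithinAt ht₀)]
    map_smul' := by
      intro r z
      funext i
      have hsmul : φ (r • z.1) = r • φ z.1 := by
        funext t
        simp [φ, Finset.mul_sum, mul_left_comm]
      simp only [SetLike.val_smul, hsmul, RingHom.id_apply, Pi.smul_apply]
      rw [iteratedDerivWithin_const_smul ht₀ hsU r ((hφsmooth z.1 z.2 i).contDiffWithinAt ht₀)] }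
  let T : Sol →ₗ[ℝ] (Fin m → ℝ) :=
  { toFun := fun z => z.1 t₀
    map_add' := fun _ _ => rfl
    map_smul' := fun _ _ => rfl }
  have hker : LinearMap.ker T ≤ LinearMap.ker Φ := by
    intro z hzker
    have h0 : z.1 t₀ = 0 := hzker
    have hz' : ∀ t ∈ Set.Ioo a b, HasDerivAt z.1 (fun i => ∑ j, A t i j * z.1 t j) t := z.2
    have hev : z.1 =ᶠ[𝓝 t₀] (fun _ => 0) := sol_eventually_zero hA ht₀ hz' h0
    have hφev : φ z.1 =ᶠ[𝓝 t₀] (fun _ => (0 : ℝ)) := by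
      filter_upwards [hev] with t ht
      simp [φ, ht]
    rw [LinearMap.mem_ker]
    funext i
    show iteratedDerivWithin (i : ℕ) (φ z.1) s t₀ = 0
    have hmem : s ∈ 𝓝 t₀ := isOpen_Ioo.mem_nhds ht₀
    rw [show iteratedDerivWithin (i : ℕ) (φ z.1) s t₀
        = iteratedDeriv (i : ℕ) (φ z.1) t₀ from by
      rw [iteratedDerivWithin_eq_iteratedFDerivWithin, iteratedDeriv_eq_iteratedFDeriv,
        iteratedFDerivWithin_of_isOpen _ isOpen_Ioo ht₀]]
    rw [hφev.iteratedDeriv_eq (i : ℕ)]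
    have : iteratedDeriv (i : ℕ) (fun _ : ℝ => (0 : ℝ)) = fun _ => 0 := by
      induction (i : ℕ) with
      | zero => simp [iteratedDeriv_zero]
      | succ k IH => rw [iteratedDeriv_succ, IH]; simp
    rw [this]
  -- dimension count
  let Φ' := (LinearMap.ker T).liftQ Φ hker
  let T' := (LinearMap.ker T).liftQ T le_rfl
  have hT' : Function.Injective T' := by
    rw [← LinearMap.ker_eq_bot]
    exact Submodule.ker_liftQ_eq_bot _ _ _ le_rfl
  have : Module.Finite ℝ (Sol ⧸ LinearMap.ker T) := Module.Finite.of_injective T' hT'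
  have hfr : Module.finrank ℝ (Sol ⧸ LinearMap.ker T) ≤ m := by
    have := LinearMap.finrank_le_finrank_of_injective hT'
    simpa [Module.finrank_fin_fun] using this
  have hrange : LinearMap.range Φ = LinearMap.range Φ' :=
    (Submodule.range_liftQ _ _ _).symm
  have hlt : LinearMap.range Φ < ⊤ := by
    apply Submodule.lt_top_of_finrank_lt_finrank
    rw [hrange]
    calc Module.finrank ℝ (LinearMap.range Φ')
        ≤ Module.finrank ℝ (Sol ⧸ LinearMap.ker T) := Φ'.finrank_range_le
      _ ≤ m := hfr
      _ < Module.finrank ℝ (Fin (m + 1) → ℝ) := by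
          rw [Module.finrank_fin_fun]; omega
  obtain ⟨f, hf0, hfmap⟩ :=
    (LinearMap.range Φ).exists_dual_map_eq_bot_of_lt_top hlt inferInstance
  refine ⟨fun i => f (fun j => if i = j then 1 else 0), ?_, ?_⟩
  · intro hC
    obtain ⟨v, hv⟩ := DFunLike.ne_iff.1 hf0
    apply hv
    simp only [LinearMap.zero_apply]
    rw [LinearMap.pi_apply_eq_sum_univ f v]
    refine Finset.sum_eq_zero fun i _ => ?_
    have hCi : f (fun j => if i = j then 1 else 0) = 0 := by
      have := congrFun hC i
      simpa using this
    rw [hCi, smul_zero]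
  · intro z hz
    have hmemr : Φ ⟨z, hz⟩ ∈ LinearMap.range Φ := LinearMap.mem_range_self _ _
    have hfv : f (Φ ⟨z, hz⟩) = 0 := by
      have : f (Φ ⟨z, hz⟩) ∈ (LinearMap.range Φ).map f :=
        Submodule.mem_map_of_mem hmemr
      rw [hfmap] at this
      simpa using this
    rw [LinearMap.pi_apply_eq_sum_univ f (Φ ⟨z, hz⟩)] at hfv
    have heq : ∑ i : Fin (m + 1),
        (fun i => f (fun j => if i = j then 1 else 0)) i * iteratedDeriv (i : ℕ)
          (fun t => ∑ s', c t s' * z t s') t₀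
        = ∑ i : Fin (m + 1), Φ ⟨z, hz⟩ i • f (fun j => if i = j then 1 else 0) := by
      refine Finset.sum_congr rfl fun i _ => ?_
      have hΦi : Φ ⟨z, hz⟩ i = iteratedDeriv (i : ℕ) (φ z) t₀ := by
        show iteratedDerivWithin (i : ℕ) (φ z) s t₀ = iteratedDeriv (i : ℕ) (φ z) t₀
        rw [iteratedDerivWithin_eq_iteratedFDerivWithin, iteratedDeriv_eq_iteratedFDeriv,
          iteratedFDerivWithin_of_isOpen _ isOpen_Ioo ht₀]
      rw [hΦi, smul_eq_mul, mul_comm]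
    exact heq.trans hfv
end

section
/- For all (t,y) ∈ I × U and all i = 1,…,n−1: ∂φ_i/∂t = −Σ_{s=1}^n (1/Ω)(∂H/∂p_s)(∂p_s/∂y^i) − Σ_{s=1}^n ((1/Ω)(∂H/∂x^s) − Q_s)(∂x^s/∂y^i), where H, Q_s and Ω are evaluated at (x(t,y), p(t,y)). (Formula (7.10): the time derivative of a deviation function along trajectories of the Newtonian dynamical system in relative form.) -/
/-- Formula (7.10): along the Newtonian dynamical system written in relative form
(`∂xⁱ/∂t = (1/Ω)(∂H/∂pᵢ)`, `∂pᵢ/∂t = -(1/Ω)(∂H/∂xⁱ) + Qᵢ`), the time derivative of each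
deviation function `φᵢ = ∑ₛ pₛ ∂xˢ/∂yⁱ` is
`∂φᵢ/∂t = -∑ₛ (1/Ω)(∂H/∂pₛ)(∂pₛ/∂yⁱ) - ∑ₛ ((1/Ω)(∂H/∂xˢ) - Qₛ)(∂xˢ/∂yⁱ)`. -/
theorem stmt_1 (n : ℕ) (hn : 2 ≤ n)
    (H : (Fin n → ℝ) × (Fin n → ℝ) → ℝ) (hH : ContDiff ℝ (⊤ : ℕ∞) H)
    (Q : Fin n → (Fin n → ℝ) × (Fin n → ℝ) → ℝ) (hQ : ∀ s, ContDiff ℝ (⊤ : ℕ∞) (Q s))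
    (Om : (Fin n → ℝ) × (Fin n → ℝ) → ℝ)
    (hOm : ∀ q, Om q = ∑ k, q.2 k * fderiv ℝ H q (0, Pi.single k 1))
    (U : Set (Fin (n - 1) → ℝ)) (hU : IsOpen U)
    (a b : ℝ) (ha : a < 0) (hb : 0 < b)
    (x p : ℝ × (Fin (n - 1) → ℝ) → (Fin n → ℝ))
    (hx : ContDiffOn ℝ (⊤ : ℕ∞) x (Set.Ioo a b ×ˢ U))
    (hp : ContDiffOn ℝ (⊤ : ℕ∞) p (Set.Ioo a b ×ˢ U))
    (hOmne : ∀ q ∈ Set.Ioo a b ×ˢ U, Om (x q, p q) ≠ 0)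
    (hsys1 : ∀ q ∈ Set.Ioo a b ×ˢ U, ∀ i : Fin n,
      fderiv ℝ x q (1, 0) i
        = (1 / Om (x q, p q)) * fderiv ℝ H (x q, p q) (0, Pi.single i 1))
    (hsys2 : ∀ q ∈ Set.Ioo a b ×ˢ U, ∀ i : Fin n,
      fderiv ℝ p q (1, 0) i
        = -(1 / Om (x q, p q)) * fderiv ℝ H (x q, p q) (Pi.single i 1, 0)
          + Q i (x q, p q)) :
    ∀ q ∈ Set.Ioo a b ×ˢ U, ∀ i : Fin (n - 1),
      fderiv ℝ (fun q' => ∑ s, p q' s * fderiv ℝ x q' (0, Pi.single i 1) s) q (1, 0)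
        = -(∑ s, (1 / Om (x q, p q)) * fderiv ℝ H (x q, p q) (0, Pi.single s 1)
              * fderiv ℝ p q (0, Pi.single i 1) s)
          - ∑ s, ((1 / Om (x q, p q)) * fderiv ℝ H (x q, p q) (Pi.single s 1, 0)
              - Q s (x q, p q)) * fderiv ℝ x q (0, Pi.single i 1) s := by
  intro q hq i
  have hV : IsOpen (Set.Ioo a b ×ˢ U) := isOpen_Ioo.prod hU
  have hmem : Set.Ioo a b ×ˢ U ∈ nhds q := hV.mem_nhds hq
  set v : ℝ × (Fin (n-1) → ℝ) := ((1:ℝ), (0 : Fin (n-1) → ℝ)) with hv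
  set w : ℝ × (Fin (n-1) → ℝ) := ((0:ℝ), Pi.single i 1) with hw
  -- basic differentiability facts
  have hxA : ContDiffAt ℝ (⊤ : ℕ∞) x q := hx.contDiffAt hmem
  have hpA : ContDiffAt ℝ (⊤ : ℕ∞) p q := hp.contDiffAt hmem
  have dx : DifferentiableAt ℝ x q := hxA.differentiableAt (by simp)
  have dp : DifferentiableAt ℝ p q := hpA.differentiableAt (by simp)
  have dps : ∀ s : Fin n, DifferentiableAt ℝ (fun q' => p q' s) q := fun s =>
    ((ContinuousLinearMap.proj s : (Fin n → ℝ) →L[ℝ] ℝ).differentiable.differentiableAt).comp q dp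
  have hdH : Differentiable ℝ (fderiv ℝ H) := (hH.fderiv_right (m := 1) (by exact WithTop.coe_le_coe.mpr le_top)).differentiable one_ne_zero
  have dxp : DifferentiableAt ℝ (fun q' => (x q', p q')) q := dx.prodMk dp
  have dHcomp : DifferentiableAt ℝ (fun q' => fderiv ℝ H (x q', p q')) q :=
    (hdH _).comp q dxp
  have dA : ∀ s : Fin n, DifferentiableAt ℝ
      (fun q' => fderiv ℝ H (x q', p q') ((0 : Fin n → ℝ), Pi.single s 1)) q :=
    fun s => dHcomp.clm_apply (differentiableAt_const _)
  have hωeq : (fun q' : ℝ × (Fin (n-1) → ℝ) => Om (x q', p q')) =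
      fun q' => ∑ k, p q' k * fderiv ℝ H (x q', p q') ((0 : Fin n → ℝ), Pi.single k 1) :=
    funext fun q' => hOm _
  have dω : DifferentiableAt ℝ (fun q' => Om (x q', p q')) q := by
    rw [hωeq]
    exact DifferentiableAt.fun_sum fun k _ => (dps k).mul (dA k)
  have hωne : Om (x q, p q) ≠ 0 := hOmne q hq
  have dinv : DifferentiableAt ℝ (fun q' => 1 / Om (x q', p q')) q := by
    simp only [one_div]; exact dω.inv hωne
  have dr : ∀ s : Fin n, DifferentiableAt ℝ
      (fun q' => (1 / Om (x q', p q')) * fderiv ℝ H (x q', p q') (0, Pi.single s 1)) q :=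
    fun s => dinv.mul (dA s)
  -- the derivative of x, as a function
  have hD : ContDiffOn ℝ 1 (fderiv ℝ x) (Set.Ioo a b ×ˢ U) :=
    hx.fderiv_of_isOpen hV (by exact WithTop.coe_le_coe.mpr le_top)
  have dD : DifferentiableAt ℝ (fderiv ℝ x) q :=
    (hD.differentiableOn one_ne_zero).differentiableAt hmem
  have dg : DifferentiableAt ℝ (fun q' => fderiv ℝ x q' w) q :=
    dD.clm_apply (differentiableAt_const w)
  have dgs : ∀ s : Fin n, DifferentiableAt ℝ (fun q' => fderiv ℝ x q' w s) q := fun s =>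
    ((ContinuousLinearMap.proj s : (Fin n → ℝ) →L[ℝ] ℝ).differentiable.differentiableAt).comp q dg
  -- projection lemma
  have proj_fderiv : ∀ (f : ℝ × (Fin (n-1) → ℝ) → (Fin n → ℝ)), DifferentiableAt ℝ f q →
      ∀ (s : Fin n) (z : ℝ × (Fin (n-1) → ℝ)),
      fderiv ℝ (fun q' => f q' s) q z = fderiv ℝ f q z s := by
    intro f hf s z
    have h : fderiv ℝ ((ContinuousLinearMap.proj s : (Fin n → ℝ) →L[ℝ] ℝ) ∘ f) q =
        (ContinuousLinearMap.proj s : (Fin n → ℝ) →L[ℝ] ℝ).comp (fderiv ℝ f q) :=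
      (((ContinuousLinearMap.proj s : (Fin n → ℝ) →L[ℝ] ℝ).hasFDerivAt).comp q
        hf.hasFDerivAt).fderiv
    have h2 : (fun q' => f q' s) = (ContinuousLinearMap.proj s : (Fin n → ℝ) →L[ℝ] ℝ) ∘ f := rfl
    rw [h2, h]; rfl
  -- clm-apply lemma for the second derivative of x
  have key_clm : ∀ u z : ℝ × (Fin (n-1) → ℝ),
      fderiv ℝ (fun q' => fderiv ℝ x q' u) q z = fderiv ℝ (fderiv ℝ x) q z u := by
    intro u z
    rw [fderiv_clm_apply dD (differentiableAt_const u)]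
    simp
  have hsym := hxA.isSymmSndFDerivAt (by rw [minSmoothness_of_isRCLikeNormedField]; exact WithTop.coe_le_coe.mpr (le_top : (2 : ℕ∞) ≤ ⊤))
  -- swap t and y derivatives of x and substitute the first system equation
  have step_t : ∀ s : Fin n,
      fderiv ℝ (fun q' => fderiv ℝ x q' w s) q v
        = fderiv ℝ (fun q' =>
            (1 / Om (x q', p q')) * fderiv ℝ H (x q', p q') (0, Pi.single s 1)) q w := by
    intro s
    have dDv : DifferentiableAt ℝ (fun q' => fderiv ℝ x q' v) q :=
      dD.clm_apply (differentiableAt_const v)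
    have e1 : fderiv ℝ (fun q' => fderiv ℝ x q' w s) q v
        = fderiv ℝ (fun q' => fderiv ℝ x q' w) q v s := proj_fderiv _ dg s v
    have e2 : fderiv ℝ (fun q' => fderiv ℝ x q' w) q v s
        = fderiv ℝ (fun q' => fderiv ℝ x q' v) q w s := by
      rw [key_clm w v, key_clm v w, hsym.eq v w]
    have e3 : fderiv ℝ (fun q' => fderiv ℝ x q' v) q w s
        = fderiv ℝ (fun q' => fderiv ℝ x q' v s) q w := (proj_fderiv _ dDv s w).symm
    have heq : (fun q' => fderiv ℝ x q' v s) =ᶠ[nhds q]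
        (fun q' => (1 / Om (x q', p q')) * fderiv ℝ H (x q', p q') (0, Pi.single s 1)) := by
      filter_upwards [hmem] with y hy
      exact hsys1 y hy s
    rw [e1, e2, e3, heq.fderiv_eq]
  -- the key identity: ∑ₛ pₛ (1/Ω) H_{pₛ} = 1 near q
  have sum_one : (fun q' => ∑ s, p q' s *
        ((1 / Om (x q', p q')) * fderiv ℝ H (x q', p q') (0, Pi.single s 1)))
      =ᶠ[nhds q] (fun _ => (1:ℝ)) := by
    filter_upwards [hmem] with y hy
    have hΩ : Om (x y, p y)
        = ∑ s, p y s * fderiv ℝ H (x y, p y) (0, Pi.single s 1) := hOm (x y, p y)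
    have : ∑ s, p y s * ((1 / Om (x y, p y)) * fderiv ℝ H (x y, p y) (0, Pi.single s 1))
        = (1 / Om (x y, p y)) * ∑ s, p y s * fderiv ℝ H (x y, p y) (0, Pi.single s 1) := by
      rw [Finset.mul_sum]
      exact Finset.sum_congr rfl fun s _ => by ring
    rw [this, ← hΩ, one_div, inv_mul_cancel₀ (hOmne y hy)]
  have zero_deriv : fderiv ℝ (fun q' => ∑ s, p q' s *
      ((1 / Om (x q', p q')) * fderiv ℝ H (x q', p q') (0, Pi.single s 1))) q w = 0 := by
    rw [sum_one.fderiv_eq]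
    simp
  have e4 : fderiv ℝ (fun q' => ∑ s, p q' s *
        ((1 / Om (x q', p q')) * fderiv ℝ H (x q', p q') (0, Pi.single s 1))) q w
      = ∑ s, (fderiv ℝ (fun q' => p q' s) q w
            * ((1 / Om (x q, p q)) * fderiv ℝ H (x q, p q) (0, Pi.single s 1))
          + p q s * fderiv ℝ (fun q' =>
              (1 / Om (x q', p q')) * fderiv ℝ H (x q', p q') (0, Pi.single s 1)) q w) := by
    rw [fderiv_fun_sum (A := fun s q' => p q' s *
      ((1 / Om (x q', p q')) * fderiv ℝ H (x q', p q') (0, Pi.single s 1))) (fun s _ => (dps s).mul (dr s)), ContinuousLinearMap.sum_apply]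
    refine Finset.sum_congr rfl fun s _ => ?_
    rw [fderiv_fun_mul (dps s) (dr s)]
    simp only [ContinuousLinearMap.add_apply, ContinuousLinearMap.smul_apply, smul_eq_mul]
    ring
  have hzero : ∑ s, p q s * fderiv ℝ (fun q' =>
        (1 / Om (x q', p q')) * fderiv ℝ H (x q', p q') (0, Pi.single s 1)) q w
      = -∑ s, fderiv ℝ p q w s
          * ((1 / Om (x q, p q)) * fderiv ℝ H (x q, p q) (0, Pi.single s 1)) := by
    have h0 : ∑ s, (fderiv ℝ (fun q' => p q' s) q w
          * ((1 / Om (x q, p q)) * fderiv ℝ H (x q, p q) (0, Pi.single s 1))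
        + p q s * fderiv ℝ (fun q' =>
            (1 / Om (x q', p q')) * fderiv ℝ H (x q', p q') (0, Pi.single s 1)) q w) = 0 := by
      rw [← e4]; exact zero_deriv
    rw [Finset.sum_add_distrib] at h0
    have h1 : ∑ s, fderiv ℝ (fun q' => p q' s) q w
          * ((1 / Om (x q, p q)) * fderiv ℝ H (x q, p q) (0, Pi.single s 1))
        = ∑ s, fderiv ℝ p q w s
          * ((1 / Om (x q, p q)) * fderiv ℝ H (x q, p q) (0, Pi.single s 1)) :=
      Finset.sum_congr rfl fun s _ => by rw [proj_fderiv p dp s w]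
    linarith [h0, h1]
  -- expand the left-hand side
  have main : fderiv ℝ (fun q' => ∑ s, p q' s * fderiv ℝ x q' w s) q v
      = ∑ s, (fderiv ℝ (fun q' => p q' s) q v * fderiv ℝ x q w s
          + p q s * fderiv ℝ (fun q' => fderiv ℝ x q' w s) q v) := by
    rw [fderiv_fun_sum (A := fun s q' => p q' s * fderiv ℝ x q' w s) (fun s _ => (dps s).mul (dgs s)), ContinuousLinearMap.sum_apply]
    refine Finset.sum_congr rfl fun s _ => ?_
    rw [fderiv_fun_mul (dps s) (dgs s)]
    simp only [ContinuousLinearMap.add_apply, ContinuousLinearMap.smul_apply, smul_eq_mul]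
    ring
  rw [main]
  have main2 : ∑ s, (fderiv ℝ (fun q' => p q' s) q v * fderiv ℝ x q w s
        + p q s * fderiv ℝ (fun q' => fderiv ℝ x q' w s) q v)
      = ∑ s, ((-(1 / Om (x q, p q)) * fderiv ℝ H (x q, p q) (Pi.single s 1, 0)
            + Q s (x q, p q)) * fderiv ℝ x q w s)
        + ∑ s, p q s * fderiv ℝ (fun q' =>
            (1 / Om (x q', p q')) * fderiv ℝ H (x q', p q') (0, Pi.single s 1)) q w := by
    rw [← Finset.sum_add_distrib]
    refine Finset.sum_congr rfl fun s _ => ?_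
    rw [proj_fderiv p dp s v, hsys2 q hq s, step_t s]
  rw [main2, hzero]
  have l2 : ∑ s : Fin n, fderiv ℝ p q w s
        * (1 / Om (x q, p q) * fderiv ℝ H (x q, p q) (0, Pi.single s 1))
      = ∑ s : Fin n, 1 / Om (x q, p q) * fderiv ℝ H (x q, p q) (0, Pi.single s 1)
        * fderiv ℝ p q w s :=
    Finset.sum_congr rfl fun s _ => by ring
  have l1 : ∑ s : Fin n, (-(1 / Om (x q, p q)) * fderiv ℝ H (x q, p q) (Pi.single s 1, 0)
        + Q s (x q, p q)) * fderiv ℝ x q w s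
      = -∑ s : Fin n, (1 / Om (x q, p q) * fderiv ℝ H (x q, p q) (Pi.single s 1, 0)
        - Q s (x q, p q)) * fderiv ℝ x q w s := by
    rw [← Finset.sum_neg_distrib]
    exact Finset.sum_congr rfl fun s _ => by ring
  rw [l1, l2]
  ring
end

section
/- (∂φ_i/∂t)(0,y) = 0 for all i = 1,…,n−1 and all y ∈ U if and only if ν satisfies the Pfaff equations ∂ν/∂y^i = −Σ_{s=1}^n (ν²/Ω)(∂n_s/∂y^i)(∂H/∂p_s) − Σ_{s=1}^n ν((1/Ω)(∂H/∂x^s) − Q_s)(∂r^s/∂y^i), where H, Q_s and Ω are evaluated at (r(y), ν(y)·n(y)). (Lemma 7.1: the vanishing of the first time derivatives of the deviation functions at t = 0 is equivalent to the Pfaff equations (7.13) for the scalar function ν on the hypersurface; note that φ_i(0,y) = 0 holds automatically since p(0,y) annihilates the tangent vectors ∂r/∂y^i.) -/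
private lemma fderiv_eval' {E : Type*} [NormedAddCommGroup E] [NormedSpace ℝ E]
    {ι : Type*} [Fintype ι] {f : E → (ι → ℝ)} {q : E} (hf : DifferentiableAt ℝ f q)
    (s : ι) (v : E) :
    fderiv ℝ (fun q' => f q' s) q v = fderiv ℝ f q v s := by
  have h := ((ContinuousLinearMap.proj (R := ℝ) (φ := fun _ : ι => ℝ) s).hasFDerivAt
    (x := f q)).comp q hf.hasFDerivAt
  have h2 : fderiv ℝ (fun q' => f q' s) q
      = (ContinuousLinearMap.proj (R := ℝ) (φ := fun _ : ι => ℝ) s).comp (fderiv ℝ f q) :=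
    h.fderiv
  rw [h2]; rfl

private lemma fderiv_slice' {k : ℕ} {F : Type*} [NormedAddCommGroup F] [NormedSpace ℝ F]
    {f : ℝ × (Fin k → ℝ) → F} {y : Fin k → ℝ}
    (hf : DifferentiableAt ℝ f ((0 : ℝ), y)) (e : Fin k → ℝ) :
    fderiv ℝ (fun y' => f (0, y')) y e = fderiv ℝ f ((0 : ℝ), y) ((0 : ℝ), e) := by
  have h := hf.hasFDerivAt.comp y (ContinuousLinearMap.inr ℝ ℝ (Fin k → ℝ)).hasFDerivAt
  have h2 : fderiv ℝ (fun y' => f (0, y')) y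
      = (fderiv ℝ f ((0:ℝ), y)).comp (ContinuousLinearMap.inr ℝ ℝ (Fin k → ℝ)) := h.fderiv
  rw [h2]; rfl

private lemma fderiv_sum_mul' {E : Type*} [NormedAddCommGroup E] [NormedSpace ℝ E]
    {ι : Type*} [Fintype ι] (g h : ι → E → ℝ) {q : E}
    (hg : ∀ s, DifferentiableAt ℝ (g s) q) (hh : ∀ s, DifferentiableAt ℝ (h s) q) (v : E) :
    fderiv ℝ (fun q' => ∑ s, g s q' * h s q') q v
      = ∑ s, (fderiv ℝ (g s) q v * h s q + g s q * fderiv ℝ (h s) q v) := by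
  rw [fderiv_fun_sum (A := fun s q' => g s q' * h s q') (fun s _ => (hg s).mul (hh s)), ContinuousLinearMap.sum_apply]
  refine Finset.sum_congr rfl fun s _ => ?_
  rw [fderiv_fun_mul (hg s) (hh s)]
  simp only [ContinuousLinearMap.add_apply, ContinuousLinearMap.smul_apply, smul_eq_mul]
  ring

private lemma algebra_final {n : ℕ} (Hp Hx Qv dr dn nvv : Fin n → ℝ) (Ov νv dν : ℝ)
    (hν : νv ≠ 0) (hΩ : Ov ≠ 0)
    (hsum : ∑ s, nvv s * Hp s = Ov / νv) :
    (∑ s, (-(1/Ov) * Hx s + Qv s) * dr s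
      - ∑ s, (dν * nvv s + νv * dn s) * ((1/Ov) * Hp s) = 0)
    ↔ (dν = -(∑ s, (νv^2/Ov) * dn s * Hp s)
          - ∑ s, νv * ((1/Ov) * Hx s - Qv s) * dr s) := by
  have e1 : ∑ s, (dν * nvv s + νv * dn s) * ((1/Ov) * Hp s)
      = dν / νv + ∑ s, νv * dn s * ((1/Ov) * Hp s) := by
    have h0 : ∑ s, (dν * nvv s + νv * dn s) * ((1/Ov) * Hp s)
        = (dν * (1/Ov)) * ∑ s, nvv s * Hp s + ∑ s, νv * dn s * ((1/Ov) * Hp s) := by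
      rw [Finset.mul_sum, ← Finset.sum_add_distrib]
      exact Finset.sum_congr rfl fun s _ => by ring
    rw [h0, hsum]
    field_simp
  have e2 : ∑ s, (νv^2/Ov) * dn s * Hp s = νv * ∑ s, νv * dn s * ((1/Ov) * Hp s) := by
    rw [Finset.mul_sum]
    exact Finset.sum_congr rfl fun s _ => by ring
  have e3 : ∑ s, νv * ((1/Ov) * Hx s - Qv s) * dr s
      = -(νv * ∑ s, (-(1/Ov) * Hx s + Qv s) * dr s) := by
    rw [Finset.mul_sum, ← Finset.sum_neg_distrib]
    exact Finset.sum_congr rfl fun s _ => by ring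
  rw [e1, e2, e3]
  set A := ∑ s, νv * dn s * ((1/Ov) * Hp s) with hA
  set B := ∑ s, (-(1/Ov) * Hx s + Qv s) * dr s with hB
  constructor
  · intro h
    have h1 : dν / νv = B - A := by linarith
    have h2 : dν = (B - A) * νv := (div_eq_iff hν).mp h1
    linear_combination h2
  · intro h
    have h2 : dν / νv = B - A := by rw [h]; field_simp; ring
    linarith [h2]


/-- Lemma 7.1: for the shift of the hypersurface `r : U → ℝⁿ` with normal covector field
`nv` and initial data `x(0,y) = r(y)`, `p(0,y) = ν(y)·nv(y)`, the vanishing of the first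
time derivatives of all the deviation functions `φᵢ = ∑ₛ pₛ ∂xˢ/∂yⁱ` at `t = 0` is
equivalent to the Pfaff equations (7.13) for the scalar function `ν`:
`∂ν/∂yⁱ = -∑ₛ (ν²/Ω)(∂nvₛ/∂yⁱ)(∂H/∂pₛ) - ∑ₛ ν((1/Ω)(∂H/∂xˢ) - Qₛ)(∂rˢ/∂yⁱ)`,
with `H`, `Qₛ`, `Ω` evaluated at `(r(y), ν(y)·nv(y))`. -/
theorem stmt_2 (n : ℕ) (hn : 2 ≤ n)
    (H : (Fin n → ℝ) × (Fin n → ℝ) → ℝ) (hH : ContDiff ℝ (⊤ : ℕ∞) H)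
    (Q : Fin n → (Fin n → ℝ) × (Fin n → ℝ) → ℝ) (hQ : ∀ s, ContDiff ℝ (⊤ : ℕ∞) (Q s))
    (Om : (Fin n → ℝ) × (Fin n → ℝ) → ℝ)
    (hOm : ∀ q, Om q = ∑ k, q.2 k * fderiv ℝ H q (0, Pi.single k 1))
    (U : Set (Fin (n - 1) → ℝ)) (hU : IsOpen U)
    (a b : ℝ) (ha : a < 0) (hb : 0 < b)
    (x p : ℝ × (Fin (n - 1) → ℝ) → (Fin n → ℝ))
    (hx : ContDiffOn ℝ (⊤ : ℕ∞) x (Set.Ioo a b ×ˢ U))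
    (hp : ContDiffOn ℝ (⊤ : ℕ∞) p (Set.Ioo a b ×ˢ U))
    (hOmne : ∀ q ∈ Set.Ioo a b ×ˢ U, Om (x q, p q) ≠ 0)
    (hsys1 : ∀ q ∈ Set.Ioo a b ×ˢ U, ∀ i : Fin n,
      fderiv ℝ x q (1, 0) i
        = (1 / Om (x q, p q)) * fderiv ℝ H (x q, p q) (0, Pi.single i 1))
    (hsys2 : ∀ q ∈ Set.Ioo a b ×ˢ U, ∀ i : Fin n,
      fderiv ℝ p q (1, 0) i
        = -(1 / Om (x q, p q)) * fderiv ℝ H (x q, p q) (Pi.single i 1, 0)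
          + Q i (x q, p q))
    (r nv : (Fin (n - 1) → ℝ) → (Fin n → ℝ)) (ν : (Fin (n - 1) → ℝ) → ℝ)
    (hr : ContDiffOn ℝ (⊤ : ℕ∞) r U) (hnv : ContDiffOn ℝ (⊤ : ℕ∞) nv U) (hν : ContDiffOn ℝ (⊤ : ℕ∞) ν U)
    (hνne : ∀ y ∈ U, ν y ≠ 0) (hnvne : ∀ y ∈ U, nv y ≠ 0)
    (horth : ∀ y ∈ U, ∀ i : Fin (n - 1),
      ∑ s, nv y s * fderiv ℝ r y (Pi.single i 1) s = 0)
    (hinit1 : ∀ y ∈ U, x (0, y) = r y)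
    (hinit2 : ∀ y ∈ U, p (0, y) = ν y • nv y) :
    (∀ y ∈ U, ∀ i : Fin (n - 1),
      fderiv ℝ (fun q' => ∑ s, p q' s * fderiv ℝ x q' (0, Pi.single i 1) s) (0, y) (1, 0)
        = 0)
    ↔
    (∀ y ∈ U, ∀ i : Fin (n - 1),
      fderiv ℝ ν y (Pi.single i 1)
        = -(∑ s, (ν y ^ 2 / Om (r y, ν y • nv y)) * fderiv ℝ nv y (Pi.single i 1) s
              * fderiv ℝ H (r y, ν y • nv y) (0, Pi.single s 1))
          - ∑ s, ν y * ((1 / Om (r y, ν y • nv y))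
                * fderiv ℝ H (r y, ν y • nv y) (Pi.single s 1, 0)
              - Q s (r y, ν y • nv y)) * fderiv ℝ r y (Pi.single i 1) s) := by
  have hSopen : IsOpen (Set.Ioo a b ×ˢ U) := isOpen_Ioo.prod hU
  refine forall_congr' fun y => forall_congr' fun hy => forall_congr' fun i => ?_
  set q0 : ℝ × (Fin (n - 1) → ℝ) := ((0 : ℝ), y) with hq0def
  have hq0 : q0 ∈ Set.Ioo a b ×ˢ U := ⟨⟨ha, hb⟩, hy⟩
  have hnq0 : Set.Ioo a b ×ˢ U ∈ nhds q0 := hSopen.mem_nhds hq0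
  have hxc : ContDiffAt ℝ (⊤ : ℕ∞) x q0 := hx.contDiffAt hnq0
  have hpc : ContDiffAt ℝ (⊤ : ℕ∞) p q0 := hp.contDiffAt hnq0
  have hxd : DifferentiableAt ℝ x q0 := hxc.differentiableAt (by simp)
  have hpd : DifferentiableAt ℝ p q0 := hpc.differentiableAt (by simp)
  have hfxc : ContDiffAt ℝ (⊤ : ℕ∞) (fderiv ℝ x) q0 := hxc.fderiv_right (m := (⊤ : ℕ∞)) (by simp)
  have hfxd : DifferentiableAt ℝ (fderiv ℝ x) q0 := hfxc.differentiableAt (by simp)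
  have hΦ : ∀ c : ℝ × (Fin (n - 1) → ℝ),
      DifferentiableAt ℝ (fun q' => fderiv ℝ x q' c) q0 :=
    fun c => hfxd.clm_apply (differentiableAt_const c)
  have hΦs : ∀ c : ℝ × (Fin (n - 1) → ℝ), ∀ s : Fin n,
      DifferentiableAt ℝ (fun q' => fderiv ℝ x q' c s) q0 :=
    fun c s => differentiableAt_pi.mp (hΦ c) s
  have hps : ∀ s : Fin n, DifferentiableAt ℝ (fun q' => p q' s) q0 :=
    fun s => differentiableAt_pi.mp hpd s
  have hD2 : ∀ c : ℝ × (Fin (n - 1) → ℝ), fderiv ℝ (fun q' => fderiv ℝ x q' c) q0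
      = (fderiv ℝ (fderiv ℝ x) q0).flip c := by
    intro c
    rw [fderiv_clm_apply hfxd (differentiableAt_const c)]
    simp
  have hsymm : IsSymmSndFDerivAt ℝ x q0 := hxc.isSymmSndFDerivAt (by simp; exact WithTop.coe_le_coe.mpr le_top)
  -- expansion of the target derivative
  have expand1 : fderiv ℝ (fun q' => ∑ s, p q' s * fderiv ℝ x q' (0, Pi.single i 1) s)
        q0 (1, 0)
      = ∑ s, (fderiv ℝ p q0 (1, 0) s * fderiv ℝ x q0 (0, Pi.single i 1) s
          + p q0 s * fderiv ℝ (fderiv ℝ x) q0 (1, 0) (0, Pi.single i 1) s) := by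
    rw [fderiv_sum_mul' (fun s q' => p q' s)
      (fun s q' => fderiv ℝ x q' (0, Pi.single i 1) s) hps (fun s => hΦs _ s) _]
    refine Finset.sum_congr rfl fun s _ => ?_
    rw [fderiv_eval' hpd s _, fderiv_eval' (hΦ _) s _, hD2 _]
    simp [ContinuousLinearMap.flip_apply]
  -- the conserved quantity ∑ pₛ ẋˢ = 1
  have hGconst : ∀ q ∈ Set.Ioo a b ×ˢ U,
      ∑ s, p q s * fderiv ℝ x q ((1 : ℝ), (0 : Fin (n - 1) → ℝ)) s = 1 := by
    intro q hq
    have hOq := hOmne q hq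
    have h2 := hOm (x q, p q)
    simp only at h2
    have h3 : ∑ s, p q s * fderiv ℝ x q (1, 0) s
        = (1 / Om (x q, p q)) * ∑ s, p q s * fderiv ℝ H (x q, p q) (0, Pi.single s 1) := by
      rw [Finset.mul_sum]
      exact Finset.sum_congr rfl fun s _ => by rw [hsys1 q hq s]; ring
    rw [h3, ← h2]
    field_simp
  have hG0 : fderiv ℝ (fun q' => ∑ s, p q' s
      * fderiv ℝ x q' ((1 : ℝ), (0 : Fin (n - 1) → ℝ)) s) q0 = 0 := by
    have heq : (fun q' => ∑ s, p q' s * fderiv ℝ x q' ((1 : ℝ), (0 : Fin (n - 1) → ℝ)) s)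
        =ᶠ[nhds q0] (fun _ => (1 : ℝ)) :=
      Filter.eventuallyEq_of_mem hnq0 hGconst
    rw [heq.fderiv_eq]
    exact fderiv_const_apply 1
  have expand0 : ∑ s, (fderiv ℝ p q0 (0, Pi.single i 1) s
          * fderiv ℝ x q0 ((1 : ℝ), (0 : Fin (n - 1) → ℝ)) s
        + p q0 s * fderiv ℝ (fderiv ℝ x) q0 ((0 : ℝ), Pi.single i 1)
            ((1 : ℝ), (0 : Fin (n - 1) → ℝ)) s) = 0 := by
    have h1 := fderiv_sum_mul' (fun s q' => p q' s)
      (fun s q' => fderiv ℝ x q' ((1 : ℝ), (0 : Fin (n - 1) → ℝ)) s)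
      hps (fun s => hΦs _ s) ((0 : ℝ), Pi.single i 1)
    rw [hG0] at h1
    simp only [ContinuousLinearMap.zero_apply] at h1
    refine Eq.trans (Finset.sum_congr rfl fun s _ => ?_) h1.symm
    rw [fderiv_eval' hpd s _, fderiv_eval' (hΦ _) s _, hD2 _]
    simp [ContinuousLinearMap.flip_apply]
  have hT : fderiv ℝ (fun q' => ∑ s, p q' s * fderiv ℝ x q' (0, Pi.single i 1) s)
        q0 (1, 0)
      = ∑ s, fderiv ℝ p q0 (1, 0) s * fderiv ℝ x q0 (0, Pi.single i 1) s
        - ∑ s, fderiv ℝ p q0 (0, Pi.single i 1) s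
            * fderiv ℝ x q0 ((1 : ℝ), (0 : Fin (n - 1) → ℝ)) s := by
    rw [expand1, Finset.sum_add_distrib]
    rw [Finset.sum_add_distrib] at expand0
    have hsw : ∑ s, p q0 s * fderiv ℝ (fderiv ℝ x) q0 (1, 0) (0, Pi.single i 1) s
        = ∑ s, p q0 s * fderiv ℝ (fderiv ℝ x) q0 ((0 : ℝ), Pi.single i 1)
            ((1 : ℝ), (0 : Fin (n - 1) → ℝ)) s := by
      refine Finset.sum_congr rfl fun s _ => ?_
      rw [hsymm (1, 0) ((0 : ℝ), Pi.single i 1)]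
    rw [hsw]
    linarith [expand0]
  -- initial data
  have hx0 : x q0 = r y := hinit1 y hy
  have hp0 : p q0 = ν y • nv y := hinit2 y hy
  have hΩne : Om (r y, ν y • nv y) ≠ 0 := by
    have := hOmne q0 hq0
    rwa [hx0, hp0] at this
  have hdxv : ∀ s, fderiv ℝ x q0 ((1 : ℝ), (0 : Fin (n - 1) → ℝ)) s
      = (1 / Om (r y, ν y • nv y))
          * fderiv ℝ H (r y, ν y • nv y) (0, Pi.single s 1) := by
    intro s
    rw [hsys1 q0 hq0 s, hx0, hp0]
  have hdpv : ∀ s, fderiv ℝ p q0 (1, 0) s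
      = -(1 / Om (r y, ν y • nv y))
          * fderiv ℝ H (r y, ν y • nv y) (Pi.single s 1, 0)
        + Q s (r y, ν y • nv y) := by
    intro s
    rw [hsys2 q0 hq0 s, hx0, hp0]
  have hdxw : fderiv ℝ x q0 ((0 : ℝ), Pi.single i 1) = fderiv ℝ r y (Pi.single i 1) := by
    have h1 := fderiv_slice' (f := x) hxd (Pi.single i 1)
    have h2 : (fun y' => x (0, y')) =ᶠ[nhds y] r :=
      Filter.eventuallyEq_of_mem (hU.mem_nhds hy) hinit1
    rw [h2.fderiv_eq] at h1
    exact h1.symm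
  have hνd : DifferentiableAt ℝ ν y := (hν.contDiffAt (hU.mem_nhds hy)).differentiableAt (by simp)
  have hnvd : DifferentiableAt ℝ nv y := (hnv.contDiffAt (hU.mem_nhds hy)).differentiableAt (by simp)
  have hdpw : ∀ s, fderiv ℝ p q0 ((0 : ℝ), Pi.single i 1) s
      = fderiv ℝ ν y (Pi.single i 1) * nv y s
        + ν y * fderiv ℝ nv y (Pi.single i 1) s := by
    intro s
    have h1 := fderiv_slice' (f := p) hpd (Pi.single i 1)
    have h2 : (fun y' => p (0, y')) =ᶠ[nhds y] (fun y' => ν y' • nv y') :=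
      Filter.eventuallyEq_of_mem (hU.mem_nhds hy) hinit2
    rw [h2.fderiv_eq, fderiv_fun_smul hνd hnvd] at h1
    have h3 := congrFun h1 s
    rw [← h3]
    simp only [ContinuousLinearMap.add_apply, ContinuousLinearMap.smul_apply,
      ContinuousLinearMap.smulRight_apply, Pi.add_apply, Pi.smul_apply, smul_eq_mul]
    ring
  have hsum : ∑ s, nv y s * fderiv ℝ H (r y, ν y • nv y) (0, Pi.single s 1)
      = Om (r y, ν y • nv y) / ν y := by
    have h1 := hOm (r y, ν y • nv y)
    simp only [Pi.smul_apply, smul_eq_mul] at h1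
    have h2 : ∑ k, ν y * nv y k * fderiv ℝ H (r y, ν y • nv y) (0, Pi.single k 1)
        = ν y * ∑ s, nv y s * fderiv ℝ H (r y, ν y • nv y) (0, Pi.single s 1) := by
      rw [Finset.mul_sum]
      exact Finset.sum_congr rfl fun s _ => by ring
    rw [h1, h2, mul_div_cancel_left₀ _ (hνne y hy)]
  have hc1 : ∑ s, fderiv ℝ p q0 (1, 0) s * fderiv ℝ x q0 (0, Pi.single i 1) s
      = ∑ s, (-(1 / Om (r y, ν y • nv y))
            * fderiv ℝ H (r y, ν y • nv y) (Pi.single s 1, 0)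
          + Q s (r y, ν y • nv y)) * fderiv ℝ r y (Pi.single i 1) s :=
    Finset.sum_congr rfl fun s _ => by rw [hdpv s, congrFun hdxw s]
  have hc2 : ∑ s, fderiv ℝ p q0 (0, Pi.single i 1) s
        * fderiv ℝ x q0 ((1 : ℝ), (0 : Fin (n - 1) → ℝ)) s
      = ∑ s, (fderiv ℝ ν y (Pi.single i 1) * nv y s
          + ν y * fderiv ℝ nv y (Pi.single i 1) s)
        * ((1 / Om (r y, ν y • nv y))
            * fderiv ℝ H (r y, ν y • nv y) (0, Pi.single s 1)) :=
    Finset.sum_congr rfl fun s _ => by rw [hdpw s, hdxv s]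
  rw [hT, hc1, hc2]
  exact algebra_final
    (fun s => fderiv ℝ H (r y, ν y • nv y) (0, Pi.single s 1))
    (fun s => fderiv ℝ H (r y, ν y • nv y) (Pi.single s 1, 0))
    (fun s => Q s (r y, ν y • nv y))
    (fun s => fderiv ℝ r y (Pi.single i 1) s)
    (fun s => fderiv ℝ nv y (Pi.single i 1) s)
    (fun s => nv y s)
    (Om (r y, ν y • nv y)) (ν y) (fderiv ℝ ν y (Pi.single i 1))
    (hνne y hy) hΩne hsum
end

section
/- If for every symmetric bilinear form b : V × V → ℝ and all X, Y ∈ V one has b(X, B(Y)) = b(B(X), Y), then B is a scalar operator: there exists λ ∈ ℝ with B = λ·id_V. (The linear algebra lemma of §14: an operator symmetric with respect to all symmetric bilinear forms on a finite-dimensional real vector space is scalar.) -/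
namespace LinearMap

variable {K V : Type*} [Field K] [AddCommGroup V] [Module K V]

/-- Testing against the rank-one form `f ⊗ f` with `f v = 0` gives `f (B v) ^ 2 = f (B² v) f v = 0`,
so `B v` is killed by every functional that kills `v`. -/
theorem apply_mem_span_singleton_of_forall_isSymm (B : V →ₗ[K] V)
    (h : ∀ b : V →ₗ[K] V →ₗ[K] K, (∀ X Y, b X Y = b Y X) → ∀ X Y, b X (B Y) = b (B X) Y)
    (v : V) : B v ∈ K ∙ v := by
  rw [← Subspace.forall_mem_dualAnnihilator_apply_eq_zero_iff]
  intro f hf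
  have hfv : f v = 0 :=
    (Submodule.mem_dualAnnihilator f).1 hf v (Submodule.mem_span_singleton_self v)
  have hsq : f (B v) * f (B v) = f (B (B v)) * f v :=
    h (f.smulRight f) (fun X Y ↦ mul_comm _ _) (B v) v
  rw [hfv, mul_zero] at hsq
  exact mul_self_eq_zero.mp hsq

theorem not_linearIndependent_pair_of_apply_mem_span_singleton {B : V →ₗ[K] V} {v : V}
    (hv : B v ∈ K ∙ v) : ¬ LinearIndependent K ![v, B v] := by
  obtain ⟨c, hc⟩ := Submodule.mem_span_singleton.mp hv
  intro hind
  have hneg : (-1 : K) = 0 :=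
    (LinearIndependent.pair_iff.mp hind c (-1) (by rw [hc, neg_one_smul, add_neg_cancel])).2
  norm_num at hneg

end LinearMap

theorem stmt_9_general (V : Type*) [AddCommGroup V] [Module ℝ V]
    (B : V →ₗ[ℝ] V)
    (h : ∀ b : V →ₗ[ℝ] V →ₗ[ℝ] ℝ, (∀ X Y, b X Y = b Y X) →
      ∀ X Y, b X (B Y) = b (B X) Y) :
    ∃ c : ℝ, B = c • LinearMap.id :=
  LinearMap.exists_eq_smul_id_of_forall_notLinearIndependent fun v ↦
    LinearMap.not_linearIndependent_pair_of_apply_mem_span_singleton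
      (B.apply_mem_span_singleton_of_forall_isSymm h v)

/-- The linear algebra lemma of §14: a linear operator on a finite-dimensional real
vector space that is symmetric with respect to every symmetric bilinear form is scalar. -/
theorem stmt_9 (V : Type*) [AddCommGroup V] [Module ℝ V] [FiniteDimensional ℝ V]
    (B : V →ₗ[ℝ] V)
    (h : ∀ b : V →ₗ[ℝ] V →ₗ[ℝ] ℝ, (∀ X Y, b X Y = b Y X) →
      ∀ X Y, b X (B Y) = b (B X) Y) :
    ∃ c : ℝ, B = c • LinearMap.id :=
  stmt_9_general V B h
end

section
/- Let B : V → V be a linear operator with P∘B = B and B∘P = B (property (14.5)). If b(X, B(Y)) = b(B(X), Y) for every admissible symmetric bilinear form b and all X, Y ∈ V (property (14.7)), then B = λ·P with λ = (tr B)/(n − 1) (formulas (14.9) and (14.10)). (The key algebraic step of §14 in deriving the additional normality equations.) -/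
/-!
For a functional `f`, the form `b(X, Y) = f(P X) f(P Y)` is symmetric and admissible. If `w` lies
in the range of `P` and `f w = 0`, symmetry of `B` for this form gives
`f(B w)² = b(B w, B w) = b(B (B w), w) = 0`, so every functional killing `w` kills `B w`, that
is, `B w` is a multiple of `w`. An endomorphism of `range P` for which every vector is an
eigenvector is a homothety, so `B = c • P`; taking traces, `tr P = n - 1` identifies `c`.
-/

open LinearMap Module

section Field

variable {K V : Type*} [Field K] [AddCommGroup V] [Module K V]

theorem apply_mem_span_singleton_of_forall_admissible {P B : V →ₗ[K] V}
    (hP : IsIdempotentElem P) (hPB : P ∘ₗ B = B)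
    (hsym : ∀ b : V →ₗ[K] V →ₗ[K] K, (∀ X Y, b X Y = b Y X) →
      (∀ X Y, b X Y = b (P X) (P Y)) → ∀ X Y, b X (B Y) = b (B X) Y)
    {w : V} (hw : P w = w) : B w ∈ K ∙ w := by
  rw [← Subspace.forall_mem_dualAnnihilator_apply_eq_zero_iff]
  intro f hf
  have hfw : f w = 0 :=
    (Submodule.mem_dualAnnihilator _).mp hf w (Submodule.mem_span_singleton_self w)
  have hPP : ∀ X, P (P X) = P X := fun X => congr($hP X)
  have hPBX : ∀ X, P (B X) = B X := fun X => congr($hPB X)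
  let b := (LinearMap.mul K K).compl₁₂ (f ∘ₗ P) (f ∘ₗ P)
  have h := hsym b (fun X Y => mul_comm _ _) (fun X Y => by simp [b, hPP]) (B w) w
  simp only [b, compl₁₂_apply, coe_comp, Function.comp_apply, mul_apply', hPBX, hw, hfw,
    mul_zero] at h
  exact mul_self_eq_zero.mp h

theorem exists_eq_smul_of_forall_admissible {P B : V →ₗ[K] V}
    (hP : IsIdempotentElem P) (hPB : P ∘ₗ B = B) (hBP : B ∘ₗ P = B)
    (hsym : ∀ b : V →ₗ[K] V →ₗ[K] K, (∀ X Y, b X Y = b Y X) →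
      (∀ X Y, b X Y = b (P X) (P Y)) → ∀ X Y, b X (B Y) = b (B X) Y) :
    ∃ c : K, B = c • P := by
  have hmaps : ∀ X ∈ range P, B X ∈ range P := fun X _ => ⟨B X, congr($hPB X)⟩
  have hdep : ∀ w, ¬ LinearIndependent K ![w, B.restrict hmaps w] := fun ⟨w, hw⟩ => by
    obtain ⟨a, ha⟩ := Submodule.mem_span_singleton.mp
      (apply_mem_span_singleton_of_forall_admissible hP hPB hsym (hP.mem_range_iff.mp hw))
    rw [LinearIndependent.pair_iff]
    intro hindep
    have := (hindep a (-1) (Subtype.ext (by simp [restrict_apply, ha]))).2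
    norm_num at this
  obtain ⟨c, hc⟩ := exists_eq_smul_id_of_forall_notLinearIndependent hdep
  refine ⟨c, LinearMap.ext fun X => ?_⟩
  have := congr(($hc ⟨P X, X, rfl⟩ : V))
  simpa [restrict_apply, ← congr($hBP X)] using this

theorem eq_trace_div_trace_smul_of_eq_smul [CharZero K] [FiniteDimensional K V]
    {P B : V →ₗ[K] V} (hP : IsIdempotentElem P) {c : K} (hB : B = c • P) :
    B = (trace K V B / trace K V P) • P := by
  -- an idempotent of trace zero vanishes, so the junk value of `_ / 0` does no harm
  by_cases htr : trace K V P = 0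
  · simp [hB, IsIdempotentElem.eq_zero_of_trace_eq_zero hP htr]
  · rw [hB, map_smul, smul_eq_mul, mul_div_cancel_right₀ _ htr]

variable {p : V →ₗ[K] K} {v : V} {P : V →ₗ[K] V}

theorem isIdempotentElem_of_eq_sub_smul (hv : p v ≠ 0) (hP : ∀ X, P X = X - (p X / p v) • v) :
    IsIdempotentElem P := by
  have hpP : ∀ X, p (P X) = 0 := fun X => by simp [hP, div_mul_cancel₀ _ hv]
  exact LinearMap.ext fun X => by simp [hP (P X), hpP]

theorem trace_eq_finrank_sub_one_of_eq_sub_smul [FiniteDimensional K V] (hv : p v ≠ 0)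
    (hP : ∀ X, P X = X - (p X / p v) • v) : trace K V P = finrank K V - 1 := by
  have : P = LinearMap.id - (p v)⁻¹ • p.smulRight v := LinearMap.ext fun X => by
    simp [hP, div_eq_inv_mul, mul_smul]
  rw [this, map_sub, trace_id, map_smul, trace_smulRight, smul_eq_mul, inv_mul_cancel₀ hv]

end Field

theorem stmt_10_general (n : ℕ) (V : Type*) [AddCommGroup V] [Module ℝ V]
    [FiniteDimensional ℝ V] (hdim : Module.finrank ℝ V = n)
    (p : V →ₗ[ℝ] ℝ) (v : V) (hv : p v ≠ 0)
    (P : V →ₗ[ℝ] V) (hP : ∀ X, P X = X - (p X / p v) • v)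
    (B : V →ₗ[ℝ] V) (hPB : P ∘ₗ B = B) (hBP : B ∘ₗ P = B)
    (hsym : ∀ b : V →ₗ[ℝ] V →ₗ[ℝ] ℝ, (∀ X Y, b X Y = b Y X) →
      (∀ X Y, b X Y = b (P X) (P Y)) → ∀ X Y, b X (B Y) = b (B X) Y) :
    B = (LinearMap.trace ℝ V B / ((n : ℝ) - 1)) • P := by
  have hPidem := isIdempotentElem_of_eq_sub_smul hv hP
  obtain ⟨c, hc⟩ := exists_eq_smul_of_forall_admissible hPidem hPB hBP hsym
  have hB := eq_trace_div_trace_smul_of_eq_smul hPidem hc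
  rwa [trace_eq_finrank_sub_one_of_eq_sub_smul hv hP, hdim] at hB

/-- The key algebraic step of §14 (formulas (14.5), (14.7), (14.9), (14.10)):
if `P ∘ B = B = B ∘ P` and `B` is symmetric with respect to every admissible symmetric
bilinear form (i.e. every symmetric `b` with `b(X,Y) = b(P X, P Y)`), then
`B = (tr B / (n-1)) · P`. -/
theorem stmt_10 (n : ℕ) (hn : 2 ≤ n) (V : Type*) [AddCommGroup V] [Module ℝ V]
    [FiniteDimensional ℝ V] (hdim : Module.finrank ℝ V = n)
    (p : V →ₗ[ℝ] ℝ) (hp : p ≠ 0) (v : V) (hv : p v ≠ 0)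
    (P : V →ₗ[ℝ] V) (hP : ∀ X, P X = X - (p X / p v) • v)
    (B : V →ₗ[ℝ] V) (hPB : P ∘ₗ B = B) (hBP : B ∘ₗ P = B)
    (hsym : ∀ b : V →ₗ[ℝ] V →ₗ[ℝ] ℝ, (∀ X Y, b X Y = b Y X) →
      (∀ X Y, b X Y = b (P X) (P Y)) → ∀ X Y, b X (B Y) = b (B X) Y) :
    B = (LinearMap.trace ℝ V B / ((n : ℝ) - 1)) • P :=
  stmt_10_general n V hdim p v hv P hP B hPB hBP hsym
end

section
/- For all indices i, j and all (x,p) ∈ ℝ^n × ℝ^n: ∇_i(∇_j H) − ∇_j(∇_i H) = Σ_{k,s} p_k R̃^k_{sij} ∇̃^s H. (The commutation identity (16.10) for horizontal gradients acting on the Hamilton function: all second-order derivative terms of H cancel and the commutator is expressed through the curvature tensor of the extended connection.) -/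
variable {n : ℕ}

abbrev QQ (n : ℕ) := (Fin n → ℝ) × (Fin n → ℝ)

lemma smooth_apply (H : QQ n → ℝ) (hH : ContDiff ℝ (⊤ : ℕ∞) H) (v : QQ n) :
    ContDiff ℝ (⊤ : ℕ∞) (fun q => fderiv ℝ H q v) :=
  (hH.fderiv_right (by simp)).clm_apply contDiff_const

lemma fderiv_fderiv_apply (H : QQ n → ℝ) (hH : ContDiff ℝ (⊤ : ℕ∞) H) (q v w : QQ n) :
    fderiv ℝ (fun q => fderiv ℝ H q v) q w = fderiv ℝ (fderiv ℝ H) q w v := by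
  have h1 : DifferentiableAt ℝ (fderiv ℝ H) q :=
    ((hH.fderiv_right (m := 1) (WithTop.coe_le_coe.mpr le_top)).differentiable one_ne_zero q)
  rw [show (fun q => fderiv ℝ H q v) = fun q => (fderiv ℝ H q) ((fun _ => v) q) from rfl,
    fderiv_clm_apply h1 (differentiableAt_const v)]
  simp

lemma sym2 (H : QQ n → ℝ) (hH : ContDiff ℝ (⊤ : ℕ∞) H) (q v w : QQ n) :
    fderiv ℝ (fderiv ℝ H) q v w = fderiv ℝ (fderiv ℝ H) q w v :=
  second_derivative_symmetric (fun y => (hH.differentiable (by simp) y).hasFDerivAt)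
    (((hH.fderiv_right (m := 1) (WithTop.coe_le_coe.mpr le_top)).differentiable one_ne_zero q).hasFDerivAt) v w

lemma snd_hasFDeriv (a : Fin n) (q : QQ n) :
    HasFDerivAt (fun q : QQ n => q.2 a)
      ((ContinuousLinearMap.proj a).comp (ContinuousLinearMap.snd ℝ (Fin n → ℝ) (Fin n → ℝ))) q :=
  ((ContinuousLinearMap.proj a).comp (ContinuousLinearMap.snd ℝ (Fin n → ℝ) (Fin n → ℝ))).hasFDerivAt

lemma fderiv_grad (G : Fin n → Fin n → Fin n → QQ n → ℝ)
    (hG : ∀ k i j, ContDiff ℝ (⊤ : ℕ∞) (G k i j))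
    (H : QQ n → ℝ) (hH : ContDiff ℝ (⊤ : ℕ∞) H)
    (gradH : Fin n → QQ n → ℝ)
    (hgradH : ∀ i q, gradH i q =
      fderiv ℝ H q (Pi.single i 1, 0)
      + ∑ a, ∑ b, q.2 a * G a i b q * fderiv ℝ H q (0, Pi.single b 1))
    (j : Fin n) (q v : QQ n) :
    fderiv ℝ (gradH j) q v =
      fderiv ℝ (fderiv ℝ H) q v (Pi.single j 1, 0)
      + ∑ a, ∑ b, (v.2 a * G a j b q * fderiv ℝ H q (0, Pi.single b 1)
          + q.2 a * fderiv ℝ (G a j b) q v * fderiv ℝ H q (0, Pi.single b 1)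
          + q.2 a * G a j b q * fderiv ℝ (fderiv ℝ H) q v (0, Pi.single b 1)) := by
  have hfun : gradH j = fun q : QQ n => fderiv ℝ H q (Pi.single j 1, 0)
      + ∑ a, ∑ b, q.2 a * G a j b q * fderiv ℝ H q (0, Pi.single b 1) := funext (hgradH j)
  have hDH : ∀ w : QQ n, Differentiable ℝ (fun q => fderiv ℝ H q w) :=
    fun w => (smooth_apply H hH w).differentiable (by simp)
  have hsnd : ∀ a : Fin n, DifferentiableAt ℝ (fun q : QQ n => q.2 a) q :=
    fun a => (snd_hasFDeriv a q).differentiableAt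
  have hGd : ∀ a j b, DifferentiableAt ℝ (G a j b) q :=
    fun a j b => ((hG a j b).differentiable (by simp)) q
  have hprod : ∀ a b, DifferentiableAt ℝ
      (fun q : QQ n => q.2 a * G a j b q * fderiv ℝ H q (0, Pi.single b 1)) q :=
    fun a b => (((hsnd a).mul (hGd a j b)).mul ((hDH _) q))
  have hsum : DifferentiableAt ℝ
      (fun q : QQ n => ∑ a, ∑ b, q.2 a * G a j b q * fderiv ℝ H q (0, Pi.single b 1)) q := by
    apply DifferentiableAt.fun_sum; intro a _; apply DifferentiableAt.fun_sum; intro b _; exact hprod a b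
  rw [hfun, fderiv_fun_add ((hDH _) q) hsum]
  rw [ContinuousLinearMap.add_apply, fderiv_fderiv_apply H hH]
  congr 1
  rw [fderiv_fun_sum (fun a _ => by
    apply DifferentiableAt.fun_sum; intro b _; exact hprod a b)]
  rw [ContinuousLinearMap.sum_apply]
  refine Finset.sum_congr rfl fun a _ => ?_
  rw [fderiv_fun_sum (fun b _ => hprod a b), ContinuousLinearMap.sum_apply]
  refine Finset.sum_congr rfl fun b _ => ?_
  rw [fderiv_fun_mul ((hsnd a).fun_mul (hGd a j b)) ((hDH _) q),
    fderiv_fun_mul (hsnd a) (hGd a j b)]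
  rw [(snd_hasFDeriv a q).fderiv]
  simp only [ContinuousLinearMap.add_apply, ContinuousLinearMap.smul_apply, smul_eq_mul,
    ContinuousLinearMap.coe_comp', Function.comp_apply, ContinuousLinearMap.coe_snd',
    ContinuousLinearMap.proj_apply]
  rw [fderiv_fderiv_apply H hH]
  ring

lemma fderiv_grad_x (G : Fin n → Fin n → Fin n → QQ n → ℝ)
    (hG : ∀ k i j, ContDiff ℝ (⊤ : ℕ∞) (G k i j))
    (H : QQ n → ℝ) (hH : ContDiff ℝ (⊤ : ℕ∞) H)
    (gradH : Fin n → QQ n → ℝ)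
    (hgradH : ∀ i q, gradH i q =
      fderiv ℝ H q (Pi.single i 1, 0)
      + ∑ a, ∑ b, q.2 a * G a i b q * fderiv ℝ H q (0, Pi.single b 1))
    (j i : Fin n) (q : QQ n) :
    fderiv ℝ (gradH j) q (Pi.single i 1, 0) =
      fderiv ℝ (fderiv ℝ H) q (Pi.single i 1, 0) (Pi.single j 1, 0)
      + ∑ a, ∑ b, (q.2 a * fderiv ℝ (G a j b) q (Pi.single i 1, 0)
            * fderiv ℝ H q (0, Pi.single b 1)
          + q.2 a * G a j b q
            * fderiv ℝ (fderiv ℝ H) q (Pi.single i 1, 0) (0, Pi.single b 1)) := by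
  rw [fderiv_grad G hG H hH gradH hgradH]
  congr 1
  refine Finset.sum_congr rfl fun a _ => Finset.sum_congr rfl fun b _ => ?_
  simp

lemma fderiv_grad_p (G : Fin n → Fin n → Fin n → QQ n → ℝ)
    (hG : ∀ k i j, ContDiff ℝ (⊤ : ℕ∞) (G k i j))
    (H : QQ n → ℝ) (hH : ContDiff ℝ (⊤ : ℕ∞) H)
    (gradH : Fin n → QQ n → ℝ)
    (hgradH : ∀ i q, gradH i q =
      fderiv ℝ H q (Pi.single i 1, 0)
      + ∑ a, ∑ b, q.2 a * G a i b q * fderiv ℝ H q (0, Pi.single b 1))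
    (j m : Fin n) (q : QQ n) :
    fderiv ℝ (gradH j) q (0, Pi.single m 1) =
      fderiv ℝ (fderiv ℝ H) q (0, Pi.single m 1) (Pi.single j 1, 0)
      + ∑ b, G m j b q * fderiv ℝ H q (0, Pi.single b 1)
      + ∑ a, ∑ b, (q.2 a * fderiv ℝ (G a j b) q (0, Pi.single m 1)
            * fderiv ℝ H q (0, Pi.single b 1)
          + q.2 a * G a j b q
            * fderiv ℝ (fderiv ℝ H) q (0, Pi.single m 1) (0, Pi.single b 1)) := by
  rw [fderiv_grad G hG H hH gradH hgradH]
  have hdelta : ∑ a, ∑ b, ((Pi.single m 1 : Fin n → ℝ) a * G a j b q * fderiv ℝ H q (0, Pi.single b 1))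
      = ∑ b, G m j b q * fderiv ℝ H q (0, Pi.single b 1) := by
    rw [Finset.sum_eq_single m]
    · simp
    · intro a _ ha
      simp [Pi.single_eq_of_ne ha]
    · simp
  simp only [Finset.sum_add_distrib]
  rw [hdelta]
  ring

lemma sum_swap4 {n : ℕ} {M : Type*} [AddCommMonoid M] (f : Fin n → Fin n → Fin n → Fin n → M) :
    ∑ a, ∑ b, ∑ c, ∑ d, f a b c d = ∑ c, ∑ d, ∑ a, ∑ b, f a b c d := by
  calc ∑ a, ∑ b, ∑ c, ∑ d, f a b c d
      = ∑ a, ∑ c, ∑ b, ∑ d, f a b c d :=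
        Finset.sum_congr rfl fun a _ => Finset.sum_comm
    _ = ∑ c, ∑ a, ∑ b, ∑ d, f a b c d := Finset.sum_comm
    _ = ∑ c, ∑ a, ∑ d, ∑ b, f a b c d :=
        Finset.sum_congr rfl fun c _ => Finset.sum_congr rfl fun a _ => Finset.sum_comm
    _ = ∑ c, ∑ d, ∑ a, ∑ b, f a b c d :=
        Finset.sum_congr rfl fun c _ => Finset.sum_comm

lemma alg (n : ℕ) (i j : Fin n) (p hx hp : Fin n → ℝ)
    (g : Fin n → Fin n → Fin n → ℝ)
    (dgx dgp : Fin n → Fin n → Fin n → Fin n → ℝ)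
    (bxx bxp bpp bpx : Fin n → Fin n → ℝ)
    (hg : ∀ k a b, g k a b = g k b a)
    (hbxx : ∀ a b, bxx a b = bxx b a)
    (hbx : ∀ a b, bpx b a = bxp a b)
    (hbpp : ∀ a b, bpp a b = bpp b a) :
    ((bxx i j + ∑ a, ∑ b, (p a * dgx a j b i * hp b + p a * g a j b * bxp i b))
      + ∑ a, ∑ b, p a * g a i b *
          (bpx b j + ∑ d, g b j d * hp d
            + ∑ c, ∑ d, (p c * dgp c j d b * hp d + p c * g c j d * bpp b d))
      - ∑ b, g b i j * (hx b + ∑ c, ∑ d, p c * g c b d * hp d))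
    - ((bxx j i + ∑ a, ∑ b, (p a * dgx a i b j * hp b + p a * g a i b * bxp j b))
      + ∑ a, ∑ b, p a * g a j b *
          (bpx b i + ∑ d, g b i d * hp d
            + ∑ c, ∑ d, (p c * dgp c i d b * hp d + p c * g c i d * bpp b d))
      - ∑ b, g b j i * (hx b + ∑ c, ∑ d, p c * g c b d * hp d))
    = ∑ k, ∑ s, p k * (dgx k j s i - dgx k i s j
        + ∑ m, (g k i m * g m j s - g k j m * g m i s)
        + ∑ m, ∑ α, p α * (g α m i * dgp k j s m - g α m j * dgp k i s m)) * hp s := by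
  simp only [mul_add, add_mul, mul_sub, sub_mul, Finset.mul_sum, Finset.sum_mul,
    Finset.sum_add_distrib, Finset.sum_sub_distrib]
  have e1 : bxx i j = bxx j i := hbxx i j
  have e2 : ∑ a, ∑ b, p a * g a j b * bxp i b = ∑ a, ∑ b, p a * g a j b * bpx b i :=
    Finset.sum_congr rfl fun a _ => Finset.sum_congr rfl fun b _ => by rw [← hbx i b]
  have e3 : ∑ a, ∑ b, p a * g a i b * bpx b j = ∑ a, ∑ b, p a * g a i b * bxp j b :=
    Finset.sum_congr rfl fun a _ => Finset.sum_congr rfl fun b _ => by rw [hbx j b]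
  have e4 : ∑ a, ∑ b, ∑ c, ∑ d, p a * g a i b * (p c * g c j d * bpp b d)
      = ∑ a, ∑ b, ∑ c, ∑ d, p a * g a j b * (p c * g c i d * bpp b d) := by
    rw [sum_swap4]
    refine Finset.sum_congr rfl fun a _ => Finset.sum_congr rfl fun b _ =>
      Finset.sum_congr rfl fun c _ => Finset.sum_congr rfl fun d _ => ?_
    linear_combination (p a * g a j b * p c * g c i d) * hbpp d b
  have e5 : ∑ b, g b i j * hx b = ∑ b, g b j i * hx b :=
    Finset.sum_congr rfl fun b _ => by rw [hg b i j]
  have e6 : ∑ b, ∑ c, ∑ d, g b i j * (p c * g c b d * hp d)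
      = ∑ b, ∑ c, ∑ d, g b j i * (p c * g c b d * hp d) :=
    Finset.sum_congr rfl fun b _ => by rw [hg b i j]
  have eC2 : ∑ k, ∑ s, ∑ m, p k * (g k i m * g m j s) * hp s
      = ∑ a, ∑ b, ∑ d, p a * g a i b * (g b j d * hp d) := by
    refine Finset.sum_congr rfl fun k _ => ?_
    rw [Finset.sum_comm]
    exact Finset.sum_congr rfl fun m _ => Finset.sum_congr rfl fun s _ => by ring
  have eC2' : ∑ k, ∑ s, ∑ m, p k * (g k j m * g m i s) * hp s
      = ∑ a, ∑ b, ∑ d, p a * g a j b * (g b i d * hp d) := by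
    refine Finset.sum_congr rfl fun k _ => ?_
    rw [Finset.sum_comm]
    exact Finset.sum_congr rfl fun m _ => Finset.sum_congr rfl fun s _ => by ring
  have eC3 : ∑ k, ∑ s, ∑ m, ∑ α, p k * (p α * (g α m i * dgp k j s m)) * hp s
      = ∑ a, ∑ b, ∑ c, ∑ d, p a * g a i b * (p c * dgp c j d b * hp d) := by
    rw [sum_swap4, Finset.sum_comm]
    refine Finset.sum_congr rfl fun a _ => Finset.sum_congr rfl fun b _ =>
      Finset.sum_congr rfl fun c _ => Finset.sum_congr rfl fun d _ => ?_
    linear_combination (p c * p a * dgp c j d b * hp d) * hg a b i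
  have eC3' : ∑ k, ∑ s, ∑ m, ∑ α, p k * (p α * (g α m j * dgp k i s m)) * hp s
      = ∑ a, ∑ b, ∑ c, ∑ d, p a * g a j b * (p c * dgp c i d b * hp d) := by
    rw [sum_swap4, Finset.sum_comm]
    refine Finset.sum_congr rfl fun a _ => Finset.sum_congr rfl fun b _ =>
      Finset.sum_congr rfl fun c _ => Finset.sum_congr rfl fun d _ => ?_
    linear_combination (p c * p a * dgp c i d b * hp d) * hg a b j
  linear_combination e1 + e2 + e3 + e4 - e5 - e6 - eC2 + eC2' - eC3 + eC3'

/-- The commutation identity (16.10) for horizontal gradients acting on the Hamilton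
function: `∇ᵢ(∇ⱼH) - ∇ⱼ(∇ᵢH) = ∑_{k,s} p_k R̃ᵏ_{sij} ∇̃ˢH`, where `∇ᵢH` is the horizontal
gradient (10.7), `∇̃ˢH = ∂H/∂pₛ` is the vertical gradient (10.3), and `R̃` is the curvature
tensor (16.8) of the symmetric extended affine connection `Γ = G`. -/
theorem stmt_11 (n : ℕ) (hn : 1 ≤ n)
    (G : Fin n → Fin n → Fin n → (Fin n → ℝ) × (Fin n → ℝ) → ℝ)
    (hG : ∀ k i j, ContDiff ℝ (⊤ : ℕ∞) (G k i j))
    (hGsym : ∀ k i j q, G k i j q = G k j i q)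
    (H : (Fin n → ℝ) × (Fin n → ℝ) → ℝ) (hH : ContDiff ℝ (⊤ : ℕ∞) H)
    (gradH : Fin n → (Fin n → ℝ) × (Fin n → ℝ) → ℝ)
    (hgradH : ∀ i q, gradH i q =
      fderiv ℝ H q (Pi.single i 1, 0)
      + ∑ a, ∑ b, q.2 a * G a i b q * fderiv ℝ H q (0, Pi.single b 1))
    (R : Fin n → Fin n → Fin n → Fin n → (Fin n → ℝ) × (Fin n → ℝ) → ℝ)
    (hR : ∀ k r i j q, R k r i j q =
      fderiv ℝ (G k j r) q (Pi.single i 1, 0) - fderiv ℝ (G k i r) q (Pi.single j 1, 0)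
      + ∑ m, (G k i m q * G m j r q - G k j m q * G m i r q)
      + ∑ m, ∑ α, q.2 α * (G α m i q * fderiv ℝ (G k j r) q (0, Pi.single m 1)
          - G α m j q * fderiv ℝ (G k i r) q (0, Pi.single m 1))) :
    ∀ i j : Fin n, ∀ q : (Fin n → ℝ) × (Fin n → ℝ),
      ((fderiv ℝ (gradH j) q (Pi.single i 1, 0)
          + ∑ a, ∑ b, q.2 a * G a i b q * fderiv ℝ (gradH j) q (0, Pi.single b 1)
          - ∑ b, G b i j q * gradH b q)
        - (fderiv ℝ (gradH i) q (Pi.single j 1, 0)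
          + ∑ a, ∑ b, q.2 a * G a j b q * fderiv ℝ (gradH i) q (0, Pi.single b 1)
          - ∑ b, G b j i q * gradH b q))
      = ∑ k, ∑ s, q.2 k * R k s i j q * fderiv ℝ H q (0, Pi.single s 1) := by
  intro i j q
  simp only [fderiv_grad_x G hG H hH gradH hgradH, fderiv_grad_p G hG H hH gradH hgradH,
    hgradH, hR]
  exact alg n i j q.2
    (fun b => fderiv ℝ H q (Pi.single b 1, 0))
    (fun b => fderiv ℝ H q (0, Pi.single b 1))
    (fun k a b => G k a b q)
    (fun k a b c => fderiv ℝ (G k a b) q (Pi.single c 1, 0))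
    (fun k a b m => fderiv ℝ (G k a b) q (0, Pi.single m 1))
    (fun a b => fderiv ℝ (fderiv ℝ H) q (Pi.single a 1, 0) (Pi.single b 1, 0))
    (fun a b => fderiv ℝ (fderiv ℝ H) q (Pi.single a 1, 0) (0, Pi.single b 1))
    (fun a b => fderiv ℝ (fderiv ℝ H) q (0, Pi.single a 1) (0, Pi.single b 1))
    (fun b a => fderiv ℝ (fderiv ℝ H) q (0, Pi.single b 1) (Pi.single a 1, 0))
    (fun k a b => hGsym k a b q)
    (fun a b => sym2 H hH q _ _)
    (fun a b => sym2 H hH q _ _)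
    (fun a b => sym2 H hH q _ _)
end

section
/- For all indices i, j and all (x,p) ∈ ℝ^n × ℝ^n: ∇_i(∇̃^j H) − ∇̃^j(∇_i H) = Σ_{k,s} p_k D^{kj}_{is} ∇̃^s H. (The commutation identity (16.11) between horizontal and vertical gradients acting on the Hamilton function; the dynamic curvature tensor D measures the momentum-dependence of the extended connection and vanishes for ordinary affine connections.) -/
/-- The commutation identity (16.11) between the horizontal and vertical gradients acting
on the Hamilton function: `∇ᵢ(∇̃ʲH) - ∇̃ʲ(∇ᵢH) = ∑_{k,s} p_k Dᵏʲ_{is} ∇̃ˢH`, where the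
dynamic curvature tensor is `Dᵏʳ_{ij} = -∂Γᵏ_{ij}/∂p_r` (formula (16.7)). -/
theorem stmt_12 (n : ℕ) (hn : 1 ≤ n)
    (G : Fin n → Fin n → Fin n → (Fin n → ℝ) × (Fin n → ℝ) → ℝ)
    (hG : ∀ k i j, ContDiff ℝ (⊤ : ℕ∞) (G k i j))
    (hGsym : ∀ k i j q, G k i j q = G k j i q)
    (H : (Fin n → ℝ) × (Fin n → ℝ) → ℝ) (hH : ContDiff ℝ (⊤ : ℕ∞) H)
    (gradH : Fin n → (Fin n → ℝ) × (Fin n → ℝ) → ℝ)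
    (hgradH : ∀ i q, gradH i q =
      fderiv ℝ H q (Pi.single i 1, 0)
      + ∑ a, ∑ b, q.2 a * G a i b q * fderiv ℝ H q (0, Pi.single b 1)) :
    ∀ i j : Fin n, ∀ q : (Fin n → ℝ) × (Fin n → ℝ),
      ((fderiv ℝ (fun q' => fderiv ℝ H q' (0, Pi.single j 1)) q (Pi.single i 1, 0)
          + ∑ a, ∑ b, q.2 a * G a i b q
              * fderiv ℝ (fun q' => fderiv ℝ H q' (0, Pi.single j 1)) q (0, Pi.single b 1)
          + ∑ b, G j i b q * fderiv ℝ H q (0, Pi.single b 1))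
        - fderiv ℝ (gradH i) q (0, Pi.single j 1))
      = ∑ k, ∑ s, q.2 k * (-fderiv ℝ (G k i s) q (0, Pi.single j 1))
          * fderiv ℝ H q (0, Pi.single s 1) := by
  intro i j q
  set v : (Fin n → ℝ) × (Fin n → ℝ) := (0, Pi.single j 1) with hv
  have hD2 : ContDiff ℝ (⊤ : ℕ∞) (fderiv ℝ H) := hH.fderiv_right (by simp)
  have hD2q : DifferentiableAt ℝ (fderiv ℝ H) q := (hD2.differentiable (by simp)) q
  have hsym : ∀ w u : (Fin n → ℝ) × (Fin n → ℝ), fderiv ℝ (fderiv ℝ H) q w u = fderiv ℝ (fderiv ℝ H) q u w :=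
    hH.contDiffAt.isSymmSndFDerivAt (by simp only [minSmoothness_of_isRCLikeNormedField]; exact WithTop.coe_le_coe.2 (le_top : (2 : ℕ∞) ≤ ⊤))
  -- derivative of q' ↦ fderiv H q' u
  have key : ∀ u : (Fin n → ℝ) × (Fin n → ℝ), fderiv ℝ (fun q' => fderiv ℝ H q' u) q
      = (fderiv ℝ (fderiv ℝ H) q).flip u := by
    intro u
    have := fderiv_clm_apply hD2q (differentiableAt_const u)
    simpa using this
  have hHu : ∀ u : (Fin n → ℝ) × (Fin n → ℝ), DifferentiableAt ℝ (fun q' => fderiv ℝ H q' u) q :=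
    fun u => hD2q.clm_apply (differentiableAt_const u)
  -- the coordinate map and its derivative
  have hL : ∀ a : Fin n, HasFDerivAt (fun q' : (Fin n → ℝ) × (Fin n → ℝ) => q'.2 a)
      ((ContinuousLinearMap.proj a).comp (ContinuousLinearMap.snd ℝ (Fin n → ℝ) (Fin n → ℝ))) q :=
    fun a => ((ContinuousLinearMap.proj a).comp
      (ContinuousLinearMap.snd ℝ (Fin n → ℝ) (Fin n → ℝ))).hasFDerivAt
  -- derivative of each summand
  have hTd : ∀ a b : Fin n, HasFDerivAt
      (fun q' => q'.2 a * G a i b q' * fderiv ℝ H q' (0, Pi.single b 1))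
      ((q.2 a * G a i b q) • ((fderiv ℝ (fderiv ℝ H) q).flip (0, Pi.single b 1))
        + (fderiv ℝ H q (0, Pi.single b 1)) •
          ((q.2 a) • (fderiv ℝ (G a i b) q)
            + (G a i b q) • ((ContinuousLinearMap.proj a).comp
                (ContinuousLinearMap.snd ℝ (Fin n → ℝ) (Fin n → ℝ))))) q := by
    intro a b
    have hGa : HasFDerivAt (G a i b) (fderiv ℝ (G a i b) q) q :=
      (((hG a i b).differentiable (by simp)) q).hasFDerivAt
    have hfb : HasFDerivAt (fun q' => fderiv ℝ H q' (0, Pi.single b 1))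
        ((fderiv ℝ (fderiv ℝ H) q).flip (0, Pi.single b 1)) q :=
      key (0, Pi.single b 1) ▸ (hHu (0, Pi.single b 1)).hasFDerivAt
    exact ((hL a).mul hGa).mul hfb
  have hterm : ∀ a b : Fin n,
      fderiv ℝ (fun q' => q'.2 a * G a i b q' * fderiv ℝ H q' (0, Pi.single b 1)) q v
      = q.2 a * G a i b q * fderiv ℝ (fderiv ℝ H) q v (0, Pi.single b 1)
        + fderiv ℝ H q (0, Pi.single b 1) *
          (q.2 a * fderiv ℝ (G a i b) q v + G a i b q * ((Pi.single j 1 : Fin n → ℝ) a)) := by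
    intro a b
    rw [(hTd a b).fderiv]
    simp [hv]
    ring
  -- rewrite gradH and differentiate
  have hgH : gradH i = fun q' => fderiv ℝ H q' (Pi.single i 1, 0)
      + ∑ a, ∑ b, q'.2 a * G a i b q' * fderiv ℝ H q' (0, Pi.single b 1) :=
    funext (hgradH i)
  have hgrad : fderiv ℝ (gradH i) q v
      = fderiv ℝ (fderiv ℝ H) q v (Pi.single i 1, 0)
        + ∑ a, ∑ b, (q.2 a * G a i b q * fderiv ℝ (fderiv ℝ H) q v (0, Pi.single b 1)
          + fderiv ℝ H q (0, Pi.single b 1) *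
            (q.2 a * fderiv ℝ (G a i b) q v + G a i b q * ((Pi.single j 1 : Fin n → ℝ) a))) := by
    rw [hgH]
    rw [fderiv_fun_add (hHu _) (by
      apply DifferentiableAt.fun_sum; intro a _
      apply DifferentiableAt.fun_sum; intro b _
      exact (hTd a b).differentiableAt)]
    rw [ContinuousLinearMap.add_apply, key, fderiv_fun_sum (fun a _ => by
      apply DifferentiableAt.fun_sum; intro b _
      exact (hTd a b).differentiableAt)]
    simp only [ContinuousLinearMap.coe_sum', Finset.sum_apply]
    congr 1
    refine Finset.sum_congr rfl fun a _ => ?_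
    rw [fderiv_fun_sum (fun b _ => (hTd a b).differentiableAt)]
    simp only [ContinuousLinearMap.coe_sum', Finset.sum_apply]
    exact Finset.sum_congr rfl fun b _ => hterm a b
  rw [hgrad, key]
  simp only [ContinuousLinearMap.flip_apply]
  have e1 : ∀ b : Fin n, fderiv ℝ (fderiv ℝ H) q v (0, Pi.single b 1)
      = fderiv ℝ (fderiv ℝ H) q (0, Pi.single b 1) v := fun b => hsym v _
  rw [hsym v (Pi.single i 1, 0)]
  simp only [e1, mul_add, Finset.sum_add_distrib]
  have e2 : ∑ a, ∑ b, fderiv ℝ H q (0, Pi.single b 1)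
        * (G a i b q * ((Pi.single j 1 : Fin n → ℝ) a))
      = ∑ b, G j i b q * fderiv ℝ H q (0, Pi.single b 1) := by
    rw [Finset.sum_comm]
    refine Finset.sum_congr rfl fun b _ => ?_
    simp [Pi.single_apply, mul_ite, Finset.sum_ite_eq']
    ring
  have e3 : ∀ k s : Fin n, q.2 k * (-fderiv ℝ (G k i s) q v) * fderiv ℝ H q (0, Pi.single s 1)
      = -(fderiv ℝ H q (0, Pi.single s 1) * (q.2 k * fderiv ℝ (G k i s) q v)) := by
    intro k s; ring
  simp only [e3, Finset.sum_neg_distrib]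
  rw [e2]
  ring
end

section
/- At every point (x,p) where Ω(x,p) ≠ 0, the quantity E_{rs} = Σ_q (p_q/Ω) · ∂/∂p_q[(1/Ω)(∂H/∂p_r)] · (∂H/∂p_s) + (1/Ω²)(∂Ω/∂p_s)(∂H/∂p_r) is symmetric in its indices: E_{rs} = E_{sr} for all r, s. (The symmetry, verified in §9, of the coefficient of the product of derivatives of the normal covector in the compatibility analysis of the Pfaff equations; it allows these terms to be dropped from the compatibility condition.) -/
/-- The symmetry verified in §9: at every point where `Ω ≠ 0`, the quantity
`E_{rs} = ∑_q (p_q/Ω)·∂/∂p_q[(1/Ω)(∂H/∂p_r)]·(∂H/∂p_s) + (1/Ω²)(∂Ω/∂p_s)(∂H/∂p_r)`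
is symmetric in `r` and `s`. -/
theorem stmt_14 (n : ℕ) (hn : 1 ≤ n)
    (H : (Fin n → ℝ) × (Fin n → ℝ) → ℝ) (hH : ContDiff ℝ (⊤ : ℕ∞) H)
    (Om : (Fin n → ℝ) × (Fin n → ℝ) → ℝ)
    (hOm : ∀ q, Om q = ∑ k, q.2 k * fderiv ℝ H q (0, Pi.single k 1))
    (E : Fin n → Fin n → (Fin n → ℝ) × (Fin n → ℝ) → ℝ)
    (hE : ∀ r s q, E r s q =
      (∑ m, (q.2 m / Om q) *
          fderiv ℝ (fun q' => (1 / Om q') * fderiv ℝ H q' (0, Pi.single r 1)) q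
            (0, Pi.single m 1)
          * fderiv ℝ H q (0, Pi.single s 1))
      + (1 / (Om q) ^ 2) * fderiv ℝ Om q (0, Pi.single s 1)
          * fderiv ℝ H q (0, Pi.single r 1)) :
    ∀ q : (Fin n → ℝ) × (Fin n → ℝ), Om q ≠ 0 → ∀ r s : Fin n, E r s q = E s r q := by
  intro q hq r s
  classical
  -- directional derivatives of H in the p-directions are smooth
  have hg : ∀ k : Fin n,
      ContDiff ℝ (⊤ : ℕ∞) (fun q' : (Fin n → ℝ) × (Fin n → ℝ) =>
        fderiv ℝ H q' ((0, Pi.single k 1) : (Fin n → ℝ) × (Fin n → ℝ))) :=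
    fun k => (hH.fderiv_right (by simp)).clm_apply contDiff_const
  have hgd : ∀ k : Fin n,
      Differentiable ℝ (fun q' : (Fin n → ℝ) × (Fin n → ℝ) =>
        fderiv ℝ H q' ((0, Pi.single k 1) : (Fin n → ℝ) × (Fin n → ℝ))) :=
    fun k => (hg k).differentiable (by simp)
  -- symmetry of mixed second partials
  have hfd : Differentiable ℝ (fderiv ℝ H) := (hH.fderiv_right (m := (⊤ : ℕ∞)) (by simp)).differentiable (by simp)
  have hsymm : IsSymmSndFDerivAt ℝ H q :=
    (hH.contDiffAt).isSymmSndFDerivAt (by rw [minSmoothness_of_isRCLikeNormedField]; exact WithTop.coe_le_coe.mpr le_top)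
  have hA2 : ∀ k m : Fin n,
      fderiv ℝ (fun q' => fderiv ℝ H q' ((0, Pi.single k 1) : (Fin n → ℝ) × (Fin n → ℝ))) q
          ((0, Pi.single m 1) : (Fin n → ℝ) × (Fin n → ℝ))
        = fderiv ℝ (fderiv ℝ H) q (0, Pi.single m 1) (0, Pi.single k 1) := by
    intro k m
    rw [fderiv_clm_apply (hfd q) (differentiableAt_const _)]
    simp
  have hA_symm : ∀ k m : Fin n,
      fderiv ℝ (fun q' => fderiv ℝ H q' ((0, Pi.single k 1) : (Fin n → ℝ) × (Fin n → ℝ))) q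
          ((0, Pi.single m 1) : (Fin n → ℝ) × (Fin n → ℝ))
        = fderiv ℝ (fun q' => fderiv ℝ H q' ((0, Pi.single m 1) : (Fin n → ℝ) × (Fin n → ℝ))) q
          ((0, Pi.single k 1) : (Fin n → ℝ) × (Fin n → ℝ)) := by
    intro k m
    rw [hA2, hA2, hsymm (0, Pi.single m 1) (0, Pi.single k 1)]
  -- the coordinate maps
  set L : Fin n → ((Fin n → ℝ) × (Fin n → ℝ) →L[ℝ] ℝ) :=
    fun k => (ContinuousLinearMap.proj k).comp
      (ContinuousLinearMap.snd ℝ (Fin n → ℝ) (Fin n → ℝ)) with hL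
  have hLval : ∀ k m : Fin n,
      L k ((0, Pi.single m 1) : (Fin n → ℝ) × (Fin n → ℝ)) = if k = m then 1 else 0 := by
    intro k m
    simp [hL, Pi.single_apply]
  -- derivative of Om
  have hOmfun : Om = fun q' => ∑ k, q'.2 k * fderiv ℝ H q' (0, Pi.single k 1) := funext hOm
  have hOmHas : HasFDerivAt Om
      (∑ k, (q.2 k • fderiv ℝ (fun q' => fderiv ℝ H q'
            ((0, Pi.single k 1) : (Fin n → ℝ) × (Fin n → ℝ))) q
        + (fderiv ℝ H q (0, Pi.single k 1)) • L k)) q := by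
    rw [hOmfun]
    exact HasFDerivAt.fun_sum fun k _ => ((L k).hasFDerivAt).fun_mul ((hgd k q).hasFDerivAt)
  have hW : ∀ m : Fin n, fderiv ℝ Om q ((0, Pi.single m 1) : (Fin n → ℝ) × (Fin n → ℝ))
      = fderiv ℝ H q (0, Pi.single m 1)
        + ∑ k, q.2 k *
          fderiv ℝ (fun q' => fderiv ℝ H q' ((0, Pi.single k 1) : (Fin n → ℝ) × (Fin n → ℝ))) q
            (0, Pi.single m 1) := by
    intro m
    rw [hOmHas.fderiv]
    simp only [ContinuousLinearMap.coe_sum', Finset.sum_apply, ContinuousLinearMap.add_apply,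
      ContinuousLinearMap.coe_smul', Pi.smul_apply, hLval, smul_eq_mul, mul_ite, mul_one,
      mul_zero, Finset.sum_add_distrib, Finset.sum_ite_eq', Finset.mem_univ, if_true]
    ring
  have hOmDiff : Differentiable ℝ Om := by
    rw [hOmfun]
    exact Differentiable.fun_sum fun k _ => ((L k).differentiable).mul (hgd k)
  -- derivative of the inner product function
  have hf : ∀ a m : Fin n,
      fderiv ℝ (fun q' => (Om q')⁻¹ * fderiv ℝ H q'
          ((0, Pi.single a 1) : (Fin n → ℝ) × (Fin n → ℝ))) q
        ((0, Pi.single m 1) : (Fin n → ℝ) × (Fin n → ℝ))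
      = (Om q)⁻¹ *
          fderiv ℝ (fun q' => fderiv ℝ H q' ((0, Pi.single a 1) : (Fin n → ℝ) × (Fin n → ℝ))) q
            (0, Pi.single m 1)
        + fderiv ℝ H q (0, Pi.single a 1) *
          (-(Om q ^ 2)⁻¹ * fderiv ℝ Om q (0, Pi.single m 1)) := by
    intro a m
    have hinv : HasFDerivAt (fun q' => (Om q')⁻¹) ((-(Om q ^ 2)⁻¹) • fderiv ℝ Om q) q :=
      (hasDerivAt_inv hq).comp_hasFDerivAt q (hOmDiff q).hasFDerivAt
    have hmul := hinv.fun_mul ((hgd a q).hasFDerivAt)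
    rw [hmul.fderiv]
    simp [mul_comm]
  -- now compute
  rw [hE r s q, hE s r q]
  simp only [one_div, hf, hW]
  -- rewrite both sums
  have hsum : ∀ a b : Fin n,
      (∑ m, (q.2 m / Om q) *
          ((Om q)⁻¹ *
            fderiv ℝ (fun q' => fderiv ℝ H q'
              ((0, Pi.single a 1) : (Fin n → ℝ) × (Fin n → ℝ))) q (0, Pi.single m 1)
          + fderiv ℝ H q (0, Pi.single a 1) *
            (-(Om q ^ 2)⁻¹ * (fderiv ℝ H q (0, Pi.single m 1)
              + ∑ k, q.2 k * fderiv ℝ (fun q' => fderiv ℝ H q'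
                  ((0, Pi.single k 1) : (Fin n → ℝ) × (Fin n → ℝ))) q (0, Pi.single m 1))))
          * fderiv ℝ H q (0, Pi.single b 1))
      = (Om q)⁻¹ * (Om q)⁻¹ * fderiv ℝ H q (0, Pi.single b 1) *
          (∑ k, q.2 k * fderiv ℝ (fun q' => fderiv ℝ H q'
              ((0, Pi.single k 1) : (Fin n → ℝ) × (Fin n → ℝ))) q (0, Pi.single a 1))
        + ((Om q)⁻¹ * (-(Om q ^ 2)⁻¹) * fderiv ℝ H q (0, Pi.single a 1) *
            fderiv ℝ H q (0, Pi.single b 1)) *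
          (∑ m, q.2 m * (fderiv ℝ H q (0, Pi.single m 1)
            + ∑ k, q.2 k * fderiv ℝ (fun q' => fderiv ℝ H q'
                ((0, Pi.single k 1) : (Fin n → ℝ) × (Fin n → ℝ))) q (0, Pi.single m 1))) := by
    intro a b
    rw [Finset.sum_congr rfl (fun m _ => show
      (q.2 m / Om q) *
          ((Om q)⁻¹ *
            fderiv ℝ (fun q' => fderiv ℝ H q'
              ((0, Pi.single a 1) : (Fin n → ℝ) × (Fin n → ℝ))) q (0, Pi.single m 1)
          + fderiv ℝ H q (0, Pi.single a 1) *
            (-(Om q ^ 2)⁻¹ * (fderiv ℝ H q (0, Pi.single m 1)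
              + ∑ k, q.2 k * fderiv ℝ (fun q' => fderiv ℝ H q'
                  ((0, Pi.single k 1) : (Fin n → ℝ) × (Fin n → ℝ))) q (0, Pi.single m 1))))
          * fderiv ℝ H q (0, Pi.single b 1)
      = (Om q)⁻¹ * (Om q)⁻¹ * fderiv ℝ H q (0, Pi.single b 1) *
          (q.2 m * fderiv ℝ (fun q' => fderiv ℝ H q'
              ((0, Pi.single m 1) : (Fin n → ℝ) × (Fin n → ℝ))) q (0, Pi.single a 1))
        + ((Om q)⁻¹ * (-(Om q ^ 2)⁻¹) * fderiv ℝ H q (0, Pi.single a 1) *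
            fderiv ℝ H q (0, Pi.single b 1)) *
          (q.2 m * (fderiv ℝ H q (0, Pi.single m 1)
            + ∑ k, q.2 k * fderiv ℝ (fun q' => fderiv ℝ H q'
                ((0, Pi.single k 1) : (Fin n → ℝ) × (Fin n → ℝ))) q (0, Pi.single m 1)))
      by rw [hA_symm a m]; ring),
      Finset.sum_add_distrib, ← Finset.mul_sum, ← Finset.mul_sum]
  rw [hsum r s, hsum s r]
  ring
end

section
/- For every smooth scalar extended field Y(x,p) and every index q: ∇_q(Y∘λ) − (∇_q Y)∘λ = Σ_{s=1}^n (∇_q ∇̃_s L) · ((∇̃^s Y)∘λ) (formula (10.17), scalar case). In particular, if the extended connection is concordant with the Lagrange function, i.e. ∇_q ∇̃_s L = 0 for all q, s (formula (10.18)), then the horizontal gradients in the two representations agree: ∇_q(Y∘λ) = (∇_q Y)∘λ (formula (10.19)). -/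
lemma clm_decomp {n : ℕ} (f : ((Fin n → ℝ) × (Fin n → ℝ)) →L[ℝ] ℝ) (a b : Fin n → ℝ) :
    f (a, b) = ∑ i, a i * f (Pi.single i 1, 0) + ∑ s, b s * f (0, Pi.single s 1) := by
  have h : (a, b) = (∑ i : Fin n, a i • (((Pi.single i 1 : Fin n → ℝ), (0 : Fin n → ℝ))
        : (Fin n → ℝ) × (Fin n → ℝ)))
      + ∑ s : Fin n, b s • ((((0 : Fin n → ℝ)), (Pi.single s 1 : Fin n → ℝ))
        : (Fin n → ℝ) × (Fin n → ℝ)) := by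
    ext j
    · simp [Prod.fst_sum, Finset.sum_apply, Pi.single_apply, Finset.sum_ite_eq']
    · simp [Prod.snd_sum, Finset.sum_apply, Pi.single_apply, Finset.sum_ite_eq']
  rw [h, map_add, map_sum, map_sum]
  congr 1 <;> refine Finset.sum_congr rfl fun x _ => ?_
  · rw [← smul_eq_mul, ← map_smul]
  · rw [← smul_eq_mul, ← map_smul]

lemma legendre_chain {n : ℕ}
    (L : (Fin n → ℝ) × (Fin n → ℝ) → ℝ) (hL : ContDiff ℝ (⊤ : ℕ∞) L)
    (lam : (Fin n → ℝ) × (Fin n → ℝ) → (Fin n → ℝ) × (Fin n → ℝ))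
    (hlam : ∀ w, lam w = (w.1, fun i => fderiv ℝ L w (0, Pi.single i 1)))
    (Y : (Fin n → ℝ) × (Fin n → ℝ) → ℝ) (hY : ContDiff ℝ (⊤ : ℕ∞) Y)
    (w : (Fin n → ℝ) × (Fin n → ℝ)) :
    ∀ u, fderiv ℝ (fun w' => Y (lam w')) w u
      = fderiv ℝ Y (lam w) (u.1,
          fun s => fderiv ℝ (fun w' => fderiv ℝ L w' (0, Pi.single s 1)) w u) := by
  have hFi : ∀ s : Fin n, ContDiff ℝ (⊤ : ℕ∞) fun w => fderiv ℝ L w (0, Pi.single s 1) :=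
    fun s => (hL.fderiv_right (by simp)).clm_apply contDiff_const
  have hF : ContDiff ℝ (⊤ : ℕ∞) fun w (i : Fin n) => fderiv ℝ L w (0, Pi.single i 1) :=
    contDiff_pi.mpr hFi
  have hlamEq : lam = fun w => (w.1, fun i => fderiv ℝ L w (0, Pi.single i 1)) := funext hlam
  have hd : HasFDerivAt lam
      ((ContinuousLinearMap.fst ℝ (Fin n → ℝ) (Fin n → ℝ)).prod
        (fderiv ℝ (fun w (i : Fin n) => fderiv ℝ L w (0, Pi.single i 1)) w)) w := by
    rw [hlamEq]
    exact HasFDerivAt.prodMk hasFDerivAt_fst ((hF.differentiable (by simp)) w).hasFDerivAt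
  have hYd : DifferentiableAt ℝ Y (lam w) := hY.differentiable (by simp) _
  intro u
  have hcomp : fderiv ℝ (fun w' => Y (lam w')) w
      = (fderiv ℝ Y (lam w)).comp (fderiv ℝ lam w) := fderiv_comp w hYd hd.differentiableAt
  rw [hcomp, hd.fderiv]
  have hpi : fderiv ℝ (fun w (i : Fin n) => fderiv ℝ L w (0, Pi.single i 1)) w
      = ContinuousLinearMap.pi fun i =>
          fderiv ℝ (fun w => fderiv ℝ L w (0, Pi.single i 1)) w :=
    fderiv_pi fun i => (hFi i).differentiable (by simp) w
  rw [hpi]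
  rfl

lemma sum_alg {n : ℕ} (X : ℝ) (fp dq P ℓ : Fin n → ℝ) (g g2 : Fin n → Fin n → ℝ)
    (d : Fin n → Fin n → ℝ) :
    (X + ∑ s, dq s * fp s - ∑ a, ∑ b, P a * g a b * (∑ s, d s b * fp s))
      - (X + ∑ a, ∑ b, ℓ a * g2 a b * fp b)
    = ∑ s, (dq s - ∑ a, ∑ b, P a * g a b * d s b - ∑ b, g2 b s * ℓ b) * fp s := by
  have e2 : ∑ a, ∑ b, P a * g a b * (∑ s, d s b * fp s)
      = ∑ s, (∑ a, ∑ b, P a * g a b * d s b) * fp s := by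
    calc ∑ a, ∑ b, P a * g a b * (∑ s, d s b * fp s)
        = ∑ a, ∑ b, ∑ s, P a * g a b * d s b * fp s := by
          refine Finset.sum_congr rfl fun a _ => Finset.sum_congr rfl fun b _ => ?_
          rw [Finset.mul_sum]; exact Finset.sum_congr rfl fun s _ => by ring
      _ = ∑ a, ∑ s, ∑ b, P a * g a b * d s b * fp s :=
          Finset.sum_congr rfl fun a _ => Finset.sum_comm
      _ = ∑ s, ∑ a, ∑ b, P a * g a b * d s b * fp s := Finset.sum_comm
      _ = ∑ s, (∑ a, ∑ b, P a * g a b * d s b) * fp s := by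
          refine Finset.sum_congr rfl fun s _ => ?_
          rw [Finset.sum_mul]
          exact Finset.sum_congr rfl fun a _ => (Finset.sum_mul _ _ _).symm
  have e3 : ∑ a, ∑ b, ℓ a * g2 a b * fp b
      = ∑ s, (∑ b, g2 b s * ℓ b) * fp s := by
    rw [Finset.sum_comm]
    refine Finset.sum_congr rfl fun s _ => ?_
    rw [Finset.sum_mul]
    exact Finset.sum_congr rfl fun b _ => by ring
  rw [e2, e3]
  simp only [sub_mul, Finset.sum_sub_distrib]
  ring

/-- Formula (10.17) (scalar case): for a smooth scalar extended field `Y` in momentum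
representation, `∇_q(Y∘λ) - (∇_qY)∘λ = ∑ₛ (∇_q∇̃ₛL)·((∇̃ˢY)∘λ)`, where `λ` is the Legendre
map of the Lagrange function `L` and the horizontal gradients are taken in the velocity and
momentum representations respectively.  In particular, if the extended connection is
concordant with `L` (`∇_q∇̃ₛL = 0`, formula (10.18)), then `∇_q(Y∘λ) = (∇_qY)∘λ`
(formula (10.19)). -/
theorem stmt_15 (n : ℕ) (hn : 1 ≤ n)
    (L : (Fin n → ℝ) × (Fin n → ℝ) → ℝ) (hL : ContDiff ℝ (⊤ : ℕ∞) L)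
    (G : Fin n → Fin n → Fin n → (Fin n → ℝ) × (Fin n → ℝ) → ℝ)
    (hG : ∀ k i j, ContDiff ℝ (⊤ : ℕ∞) (G k i j))
    (hGsym : ∀ k i j q, G k i j q = G k j i q)
    (lam : (Fin n → ℝ) × (Fin n → ℝ) → (Fin n → ℝ) × (Fin n → ℝ))
    (hlam : ∀ w, lam w = (w.1, fun i => fderiv ℝ L w (0, Pi.single i 1)))
    (Y : (Fin n → ℝ) × (Fin n → ℝ) → ℝ) (hY : ContDiff ℝ (⊤ : ℕ∞) Y)
    (covLL : Fin n → Fin n → (Fin n → ℝ) × (Fin n → ℝ) → ℝ)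
    (hcovLL : ∀ q s w, covLL q s w =
      fderiv ℝ (fun w' => fderiv ℝ L w' (0, Pi.single s 1)) w (Pi.single q 1, 0)
      - ∑ a, ∑ b, w.2 a * G b q a (lam w)
          * fderiv ℝ (fun w' => fderiv ℝ L w' (0, Pi.single s 1)) w (0, Pi.single b 1)
      - ∑ b, G b q s (lam w) * fderiv ℝ L w (0, Pi.single b 1)) :
    (∀ q : Fin n, ∀ w : (Fin n → ℝ) × (Fin n → ℝ),
      (fderiv ℝ (fun w' => Y (lam w')) w (Pi.single q 1, 0)
        - ∑ a, ∑ b, w.2 a * G b q a (lam w)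
            * fderiv ℝ (fun w' => Y (lam w')) w (0, Pi.single b 1))
      - (fderiv ℝ Y (lam w) (Pi.single q 1, 0)
        + ∑ a, ∑ b, (lam w).2 a * G a q b (lam w) * fderiv ℝ Y (lam w) (0, Pi.single b 1))
      = ∑ s, covLL q s w * fderiv ℝ Y (lam w) (0, Pi.single s 1))
    ∧
    ((∀ q s w, covLL q s w = 0) →
      ∀ q : Fin n, ∀ w : (Fin n → ℝ) × (Fin n → ℝ),
        (fderiv ℝ (fun w' => Y (lam w')) w (Pi.single q 1, 0)
          - ∑ a, ∑ b, w.2 a * G b q a (lam w)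
              * fderiv ℝ (fun w' => Y (lam w')) w (0, Pi.single b 1))
        = fderiv ℝ Y (lam w) (Pi.single q 1, 0)
          + ∑ a, ∑ b, (lam w).2 a * G a q b (lam w)
              * fderiv ℝ Y (lam w) (0, Pi.single b 1)) := by
  have main : ∀ q : Fin n, ∀ w : (Fin n → ℝ) × (Fin n → ℝ),
      (fderiv ℝ (fun w' => Y (lam w')) w (Pi.single q 1, 0)
        - ∑ a, ∑ b, w.2 a * G b q a (lam w)
            * fderiv ℝ (fun w' => Y (lam w')) w (0, Pi.single b 1))
      - (fderiv ℝ Y (lam w) (Pi.single q 1, 0)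
        + ∑ a, ∑ b, (lam w).2 a * G a q b (lam w) * fderiv ℝ Y (lam w) (0, Pi.single b 1))
      = ∑ s, covLL q s w * fderiv ℝ Y (lam w) (0, Pi.single s 1) := by
    intro q w
    have hc := legendre_chain L hL lam hlam Y hY w
    have hp : ∀ a, (lam w).2 a = fderiv ℝ L w (0, Pi.single a 1) := fun a => by rw [hlam]
    set D : Fin n → ((Fin n → ℝ) × (Fin n → ℝ)) → ℝ :=
      fun s u => fderiv ℝ (fun w' => fderiv ℝ L w' (0, Pi.single s 1)) w u with hD
    have h1 : fderiv ℝ (fun w' => Y (lam w')) w (Pi.single q 1, 0)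
        = fderiv ℝ Y (lam w) (Pi.single q 1, 0)
          + ∑ s, D s (Pi.single q 1, 0) * fderiv ℝ Y (lam w) (0, Pi.single s 1) := by
      rw [hc, clm_decomp]
      simp [Pi.single_apply, Finset.sum_ite_eq']
      rfl
    have h2 : ∀ b', fderiv ℝ (fun w' => Y (lam w')) w (0, Pi.single b' 1)
        = ∑ s, D s (0, Pi.single b' 1) * fderiv ℝ Y (lam w) (0, Pi.single s 1) := by
      intro b'
      rw [hc, clm_decomp]
      simp
      rfl
    simp only [h1, h2, hp, hcovLL]
    exact sum_alg (fderiv ℝ Y (lam w) (Pi.single q 1, 0))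
      (fun s => fderiv ℝ Y (lam w) (0, Pi.single s 1))
      (fun s => D s (Pi.single q 1, 0)) w.2 (fun a => fderiv ℝ L w (0, Pi.single a 1))
      (fun a b => G b q a (lam w)) (fun a b => G a q b (lam w))
      (fun s b => D s (0, Pi.single b 1))
  refine ⟨main, fun h0 q w => ?_⟩
  have h := main q w
  simp only [h0, zero_mul, Finset.sum_const_zero] at h
  linarith [h]
end
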